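/- arXiv:math/0510614 — 7 statements merged into one kernel-verified Lean document; each statement's English description precedes it below -/
import Mathlib

section
/- For a nonempty proper subset K ⊂ [n] with k = |K| and σ ∈ S_n, the point M(σ) lies on the hyperplane H_K (i.e., (n-k)∑_{i∈K} σ(i) − k∑_{i∉K} σ(i) + nk(n-k)/2 = 0) if and only if σ^{-1}([k]) = K, i.e., K = {σ^{-1}(1), ..., σ^{-1}(k)}. -/
open Finset

lemma sum_lb (A : Finset ℕ) : A.card * (A.card - 1) ≤ 2 * ∑ i ∈ A, i := by
  induction A using Finset.strongInduction with
  | _ A ih =>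
    rcases A.eq_empty_or_nonempty with rfl | hA
    · simp
    · set a := A.max' hA with ha'
      have ha : a ∈ A := A.max'_mem hA
      have h1 : A.card ≤ a + 1 := by
        have hsub : A ⊆ Finset.range (a + 1) := fun x hx =>
          Finset.mem_range.2 (Nat.lt_succ_of_le (A.le_max' x hx))
        calc A.card ≤ (Finset.range (a + 1)).card := Finset.card_le_card hsub
          _ = a + 1 := Finset.card_range _
      have key := ih (A.erase a) (Finset.erase_ssubset ha)
      have hc : (A.erase a).card = A.card - 1 := Finset.card_erase_of_mem ha
      have hs : a + ∑ i ∈ A.erase a, i = ∑ i ∈ A, i := Finset.add_sum_erase A id ha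
      obtain ⟨m, hm⟩ : ∃ m, A.card = m + 1 := ⟨A.card - 1, by have := hA.card_pos; omega⟩
      rw [hm] at h1 ⊢
      rw [hc, hm] at key
      simp only [Nat.add_sub_cancel] at key ⊢
      rcases Nat.eq_zero_or_pos m with rfl | hm0
      · simp
      · obtain ⟨p, rfl⟩ : ∃ p, m = p + 1 := ⟨m - 1, by omega⟩
        simp only [Nat.add_sub_cancel] at key
        nlinarith [hs, key, h1]

lemma sum_lb_strict (A : Finset ℕ) {a : ℕ} (ha : a ∈ A) (hge : A.card ≤ a) :
    A.card * (A.card - 1) < 2 * ∑ i ∈ A, i := by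
  have key := sum_lb (A.erase a)
  have hc : (A.erase a).card = A.card - 1 := Finset.card_erase_of_mem ha
  have hs : a + ∑ i ∈ A.erase a, i = ∑ i ∈ A, i := Finset.add_sum_erase A id ha
  have hpos : 0 < A.card := Finset.card_pos.2 ⟨a, ha⟩
  obtain ⟨m, hm⟩ : ∃ m, A.card = m + 1 := ⟨A.card - 1, by omega⟩
  rw [hc, hm] at key
  rw [hm] at hge ⊢
  simp only [Nat.add_sub_cancel] at key ⊢
  rcases Nat.eq_zero_or_pos m with rfl | hm0
  · simp only [Nat.mul_zero]
    omega
  · obtain ⟨p, rfl⟩ : ∃ p, m = p + 1 := ⟨m - 1, by omega⟩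
    simp only [Nat.add_sub_cancel] at key
    nlinarith [hs, key, hge]

lemma gauss_real (n : ℕ) : ∑ j ∈ Finset.range n, ((j : ℝ) + 1) = n * (n + 1) / 2 := by
  induction n with
  | zero => simp
  | succ m ih =>
    rw [Finset.sum_range_succ, ih]
    push_cast
    ring

/-- For a nonempty proper subset `K ⊂ [n]` with `k = |K|` and `σ ∈ Sₙ`, the point `M(σ)`
lies on the hyperplane `H_K` iff `σ⁻¹([k]) = K`, i.e. `K = {σ⁻¹(1), …, σ⁻¹(k)}`. -/
theorem perm_point_mem_hyperplane_iff (n : ℕ) (K : Finset (Fin n)) (hK1 : K.Nonempty)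
    (hK2 : K ≠ Finset.univ) (σ : Equiv.Perm (Fin n)) :
    (((n : ℝ) - K.card) * (∑ i ∈ K, ((σ i : ℝ) + 1))
      - (K.card : ℝ) * (∑ i ∈ Kᶜ, ((σ i : ℝ) + 1))
      + (n : ℝ) * K.card * ((n : ℝ) - K.card) / 2 = 0)
      ↔ (∀ i : Fin n, i ∈ K ↔ (σ i : ℕ) < K.card) := by
  set k := K.card with hk
  have hk1 : 1 ≤ k := hK1.card_pos
  have hkn : k < n := by
    have h := Finset.card_lt_card (lt_of_le_of_ne (Finset.subset_univ K) hK2)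
    simpa using h
  have hn : 0 < n := lt_of_le_of_lt (Nat.zero_le k) hkn
  have hnR : (n : ℝ) ≠ 0 := Nat.cast_ne_zero.2 hn.ne'
  -- total sum
  have htot : ∑ i : Fin n, ((σ i : ℝ) + 1) = n * (n + 1) / 2 := by
    rw [Equiv.sum_comp σ (fun j : Fin n => ((j : ℝ) + 1)),
      Fin.sum_univ_eq_sum_range (fun j : ℕ => ((j : ℝ) + 1)) n, gauss_real]
  have hsumcompl : ∑ i ∈ Kᶜ, ((σ i : ℝ) + 1)
      = (n : ℝ) * (n + 1) / 2 - ∑ i ∈ K, ((σ i : ℝ) + 1) := by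
    rw [← htot, ← Finset.sum_add_sum_compl K (fun i => ((σ i : ℝ) + 1))]
    ring
  have hsplit : ∑ i ∈ K, ((σ i : ℝ) + 1) = (∑ i ∈ K, ((σ i : ℕ) : ℝ)) + k := by
    rw [Finset.sum_add_distrib, Finset.sum_const, nsmul_eq_mul, mul_one]
  have hnatcast : (∑ i ∈ K, ((σ i : ℕ) : ℝ)) = ((∑ i ∈ K, (σ i : ℕ) : ℕ) : ℝ) := by
    push_cast; ring
  -- reduce LHS to nat statement
  have step1 : (((n : ℝ) - k) * (∑ i ∈ K, ((σ i : ℝ) + 1))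
      - (k : ℝ) * (∑ i ∈ Kᶜ, ((σ i : ℝ) + 1))
      + (n : ℝ) * k * ((n : ℝ) - k) / 2 = 0)
      ↔ 2 * (∑ i ∈ K, (σ i : ℕ)) = k * (k - 1) := by
    rw [hsumcompl, hsplit]
    constructor
    · intro h
      have hmul : (n : ℝ) * (2 * (∑ i ∈ K, ((σ i : ℕ) : ℝ)))
          = (n : ℝ) * ((k : ℝ) * ((k : ℝ) - 1)) := by
        linear_combination 2 * h
      have hR : (2 * (∑ i ∈ K, ((σ i : ℕ) : ℝ))) = ((k : ℝ) * ((k : ℝ) - 1)) :=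
        mul_left_cancel₀ hnR hmul
      rw [hnatcast] at hR
      have : ((2 * ∑ i ∈ K, (σ i : ℕ) : ℕ) : ℝ) = ((k * (k - 1) : ℕ) : ℝ) := by
        push_cast [Nat.cast_sub hk1]
        push_cast at hR
        linarith
      exact_mod_cast this
    · intro h
      have hR : (((∑ i ∈ K, (σ i : ℕ)) : ℝ)) = (k : ℝ) * ((k : ℝ) - 1) / 2 := by
        have : ((2 * ∑ i ∈ K, (σ i : ℕ) : ℕ) : ℝ) = ((k * (k - 1) : ℕ) : ℝ) := by
          exact_mod_cast congrArg (Nat.cast : ℕ → ℝ) h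
        push_cast [Nat.cast_sub hk1] at this
        linarith
      rw [hnatcast] at hR ⊢
      rw [hR]
      ring
  rw [step1]
  -- now the combinatorial part
  classical
  set A : Finset ℕ := K.image (fun i => (σ i : ℕ)) with hA
  have hinj : ∀ x ∈ K, ∀ y ∈ K, (σ x : ℕ) = (σ y : ℕ) → x = y := by
    intro x _ y _ h
    exact σ.injective (Fin.val_injective h)
  have hcardA : A.card = k := by
    rw [hA, Finset.card_image_of_injOn (fun x hx y hy h => hinj x hx y hy h)]
  have hsumA : ∑ a ∈ A, a = ∑ i ∈ K, (σ i : ℕ) := Finset.sum_image hinj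
  constructor
  · intro hsum
    have hlt : ∀ i ∈ K, (σ i : ℕ) < k := by
      intro i hi
      by_contra hcon
      push_neg at hcon
      have hmem : (σ i : ℕ) ∈ A := Finset.mem_image_of_mem _ hi
      have := sum_lb_strict A hmem (hcardA ▸ hcon)
      rw [hcardA, hsumA, hsum] at this
      omega
    have hsub : A ⊆ Finset.range k := by
      intro a haA
      obtain ⟨i, hi, rfl⟩ := Finset.mem_image.1 haA
      exact Finset.mem_range.2 (hlt i hi)
    have hAeq : A = Finset.range k :=
      Finset.eq_of_subset_of_card_le hsub (by rw [hcardA, Finset.card_range])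
    intro i
    constructor
    · exact hlt i
    · intro hi
      have : (σ i : ℕ) ∈ A := by
        rw [hAeq]; exact Finset.mem_range.2 hi
      obtain ⟨j, hj, hji⟩ := Finset.mem_image.1 this
      have hji' : j = i := σ.injective (Fin.val_injective hji)
      exact hji' ▸ hj
  · intro hiff
    have hsub : A ⊆ Finset.range k := by
      intro a haA
      obtain ⟨i, hi, rfl⟩ := Finset.mem_image.1 haA
      exact Finset.mem_range.2 ((hiff i).1 hi)
    have hAeq : A = Finset.range k :=
      Finset.eq_of_subset_of_card_le hsub (by rw [hcardA, Finset.card_range])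
    rw [← hsumA, hAeq]
    have := Finset.sum_range_id_mul_two k
    omega
end

section
/- If σ₁, σ₂ ∈ S_{2n} ∖ W_n with σ₁ = τ_i σ₂ for an adjacent transposition τ_i = (i, i+1) with i ≠ n, and 0 < λ < 1, then the point v = λ·M(σ₁) + (1−λ)·M(σ₂) fails to lie on some type B hyperplane H_j^B = {x : x_j + x_{2n+1−j} = 2n+1} with j ∈ [n]; more precisely, there exists j ∈ [n] with v_j + v_{2n+1−j} ≠ 2n+1. -/
/-!
Write `pairSum σ a = σ a + σ a.rev` for the sum over the mirror pair `{a, a.rev}`. Let `b` be the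
position of the value `i` in `σ₂`. If `j` sits at the mirror position `b.rev`, then left
multiplication by `swap i j` only exchanges the two entries of that pair, so every pair sum of `σ₁`
equals the one of `σ₂`, and a pair of `σ₂` off its hyperplane stays off it for `v`. Otherwise the
pair of `b` has sum one larger in `σ₁` than in `σ₂`, so `v` has pair sum `pairSum σ₂ b + 2 + λ` there,
which is not an integer. In either case the pair can be represented by its position below `n`.
-/

open Equiv

lemma Fin.rev_ne_self {n : ℕ} (a : Fin (2 * n)) : a.rev ≠ a := by
  intro h
  have := congrArg Fin.val h
  rw [Fin.val_rev] at this
  omega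

lemma Fin.exists_val_lt_of_rev_iff {n : ℕ} {Q : Fin (2 * n) → Prop} (hQ : ∀ a, Q a.rev ↔ Q a)
    (hex : ∃ a, Q a) : ∃ b : Fin (2 * n), (b : ℕ) < n ∧ Q b := by
  obtain ⟨a, ha⟩ := hex
  by_cases hlt : (a : ℕ) < n
  · exact ⟨a, hlt, ha⟩
  · refine ⟨a.rev, ?_, (hQ a).2 ha⟩
    rw [Fin.val_rev]
    omega

lemma natCast_add_ne_natCast {lam : ℝ} (hl0 : 0 < lam) (hl1 : lam < 1) (q k : ℕ) :
    (q : ℝ) + lam ≠ k := by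
  intro h
  have hqk : q < k := by exact_mod_cast (show (q : ℝ) < k by linarith)
  have hkq : k < q + 1 := by exact_mod_cast (show (k : ℝ) < q + 1 by linarith)
  omega

namespace Equiv.Perm

variable {m : ℕ}

def pairSum (σ : Perm (Fin m)) (a : Fin m) : ℕ := σ a + σ a.rev

@[simp]
lemma pairSum_rev (σ : Perm (Fin m)) (a : Fin m) : pairSum σ a.rev = pairSum σ a := by
  rw [pairSum, pairSum, Fin.rev_rev, add_comm]

lemma swap_rev_apply_rev (b a : Fin m) : swap b b.rev a.rev = (swap b b.rev a).rev := by
  rcases eq_or_ne a b with rfl | hab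
  · simp
  rcases eq_or_ne a b.rev with rfl | hab'
  · simp
  rw [swap_apply_of_ne_of_ne hab hab', swap_apply_of_ne_of_ne]
  · exact fun h => hab' (by rw [← h, Fin.rev_rev])
  · exact fun h => hab (Fin.rev_injective h)

lemma pairSum_mul_swap_rev (σ : Perm (Fin m)) (b a : Fin m) :
    pairSum (σ * swap b b.rev) a = pairSum σ a := by
  have hcomm : pairSum (σ * swap b b.rev) a = pairSum σ (swap b b.rev a) := by
    simp only [pairSum, Perm.mul_apply, swap_rev_apply_rev]
  rw [hcomm, swap_apply_def]
  split_ifs <;> subst_vars <;> simp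

lemma pairSum_swap_mul_of_apply_rev {σ : Perm (Fin m)} {i j : Fin m}
    (h : σ (σ⁻¹ i).rev = j) : pairSum (swap i j * σ) = pairSum σ := by
  have hconj : swap i j * σ = σ * swap (σ⁻¹ i) (σ⁻¹ i).rev := by
    have hi : σ (σ⁻¹ i) = i := σ.apply_symm_apply i
    calc swap i j * σ = swap (σ (σ⁻¹ i)) (σ (σ⁻¹ i).rev) * σ := by rw [hi, h]
      _ = σ * swap (σ⁻¹ i) (σ⁻¹ i).rev := by rw [swap_apply_apply, inv_mul_cancel_right]
  exact funext fun a => hconj ▸ pairSum_mul_swap_rev σ _ a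

lemma pairSum_swap_mul_add {σ : Perm (Fin m)} {i j a : Fin m} (ha : σ a = i)
    (hi : σ a.rev ≠ i) (hj : σ a.rev ≠ j) :
    pairSum (swap i j * σ) a + i = pairSum σ a + j := by
  simp only [pairSum, Perm.mul_apply, ha, swap_apply_left, swap_apply_of_ne_of_ne hi hj]
  omega

lemma pairSum_swap_mul_eq_or_exists_eq_succ {n : ℕ} (σ : Perm (Fin (2 * n)))
    {i j : Fin (2 * n)} (hij : (i : ℕ) + 1 = j) :
    pairSum (swap i j * σ) = pairSum σ ∨ ∃ a, pairSum (swap i j * σ) a = pairSum σ a + 1 := by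
  by_cases hmirror : σ (σ⁻¹ i).rev = j
  · exact .inl (pairSum_swap_mul_of_apply_rev hmirror)
  · have hσi : σ (σ⁻¹ i) = i := σ.apply_symm_apply i
    have hrev : σ (σ⁻¹ i).rev ≠ i := fun h =>
      Fin.rev_ne_self _ (σ.injective (h.trans hσi.symm))
    have := pairSum_swap_mul_add hσi hrev hmirror
    exact .inr ⟨σ⁻¹ i, by omega⟩

end Equiv.Perm

/-- Positions and values are `0`-based: `σ a + 1` is the paper's `σ(a + 1)`, `a.rev` indexes the
paper's mirror position `2n + 1 − (a + 1)`, and `swap i j` with `i + 1 = j` is the paper's `τ_j`. -/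
theorem convex_combination_off_typeB_hyperplane_general (n : ℕ)
    (σ₁ σ₂ : Equiv.Perm (Fin (2 * n))) (i j : Fin (2 * n))
    (hij : (i : ℕ) + 1 = (j : ℕ))
    (h2 : ¬ ∀ a : Fin (2 * n), ((σ₂ a : ℕ) + 1) + ((σ₂ a.rev : ℕ) + 1) = 2 * n + 1)
    (hs : σ₁ = Equiv.swap i j * σ₂)
    (lam : ℝ) (hl0 : 0 < lam) (hl1 : lam < 1) :
    ∃ a : Fin (2 * n), (a : ℕ) < n ∧
      (lam * ((σ₁ a : ℝ) + 1) + (1 - lam) * ((σ₂ a : ℝ) + 1)) +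
        (lam * ((σ₁ a.rev : ℝ) + 1) + (1 - lam) * ((σ₂ a.rev : ℝ) + 1)) ≠ 2 * n + 1 := by
  suffices ∃ a : Fin (2 * n), (a : ℕ) < n ∧
      lam * (σ₁.pairSum a : ℝ) + (1 - lam) * σ₂.pairSum a + 2 ≠ 2 * n + 1 by
    obtain ⟨a, ha, hne⟩ := this
    refine ⟨a, ha, ?_⟩
    convert hne using 1
    simp only [Equiv.Perm.pairSum]
    push_cast
    ring
  apply Fin.exists_val_lt_of_rev_iff (fun a => by simp only [Equiv.Perm.pairSum_rev])
  subst hs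
  obtain hsum | ⟨a, ha⟩ := σ₂.pairSum_swap_mul_eq_or_exists_eq_succ hij
  · obtain ⟨b, hb⟩ := not_forall.mp h2
    refine ⟨b, fun h => hb ?_⟩
    rw [hsum] at h
    have hnat : σ₂.pairSum b + 2 = 2 * n + 1 := by
      exact_mod_cast (by linear_combination h : (σ₂.pairSum b : ℝ) + 2 = 2 * n + 1)
    simp only [Equiv.Perm.pairSum] at hnat
    omega
  · refine ⟨a, fun h => natCast_add_ne_natCast hl0 hl1 (σ₂.pairSum a + 2) (2 * n + 1) ?_⟩
    rw [ha] at h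
    push_cast at h ⊢
    linarith

/-- If `σ₁, σ₂ ∈ S_{2n} ∖ Wₙ` with `σ₁ = τ_m σ₂` for an adjacent transposition
`τ_m = (m, m+1)` with `m ≠ n` (here `i, j : Fin (2n)` encode the 1-based values
`m = j` and `m + 1`, so `(i : ℕ) + 1 = j` and `(j : ℕ) ≠ n`), and `0 < λ < 1`, then the
point `v = λ·M(σ₁) + (1−λ)·M(σ₂)` fails to lie on some type `B` hyperplane `H_a^B` with
`a ∈ [n]`: there exists `a ∈ [n]` with `v_a + v_{2n+1−a} ≠ 2n+1`. -/
theorem convex_combination_off_typeB_hyperplane (n : ℕ)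
    (σ₁ σ₂ : Equiv.Perm (Fin (2 * n))) (i j : Fin (2 * n))
    (hij : (i : ℕ) + 1 = (j : ℕ)) (hjn : (j : ℕ) ≠ n)
    (h1 : ¬ ∀ a : Fin (2 * n), ((σ₁ a : ℕ) + 1) + ((σ₁ a.rev : ℕ) + 1) = 2 * n + 1)
    (h2 : ¬ ∀ a : Fin (2 * n), ((σ₂ a : ℕ) + 1) + ((σ₂ a.rev : ℕ) + 1) = 2 * n + 1)
    (hs : σ₁ = Equiv.swap i j * σ₂)
    (lam : ℝ) (hl0 : 0 < lam) (hl1 : lam < 1) :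
    ∃ a : Fin (2 * n), (a : ℕ) < n ∧
      (lam * ((σ₁ a : ℝ) + 1) + (1 - lam) * ((σ₂ a : ℝ) + 1)) +
        (lam * ((σ₁ a.rev : ℝ) + 1) + (1 - lam) * ((σ₂ a.rev : ℝ) + 1)) ≠ 2 * n + 1 :=
  convex_combination_off_typeB_hyperplane_general n σ₁ σ₂ i j hij h2 hs lam hl0 hl1
end

section
/- The permutahedron of type B satisfies Perm(B_n) = Perm(A_{2n-1}) ∩ ⋂_{i∈[n-1]} H_i^B, where Perm(B_n) = conv{M(σ) : σ ∈ W_n}, Perm(A_{2n-1}) = conv{M(σ) : σ ∈ S_{2n}}, and H_i^B = {x ∈ ℝ^{2n} : x_i + x_{2n+1−i} = 2n+1}. -/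
/-!
Every vertex of `Perm(A_{2n-1})`, hence every point of it, has coordinate sum `n(2n+1)`; so the
`n - 1` equations `H_i^B` force the last one, `x_n + x_{n+1} = 2n+1`, as well. Such an `x` is fixed
by the affine map averaging `x` with its reflection `x ↦ (2n+1) - x ∘ rev`, so it suffices that
this map sends every vertex `M(σ)` into `Perm(B_n)`.

For that, identify `[2n]` with `[n] × Bool`, the involution `i ↦ 2n+1-i` becoming the flip of the
`Bool` coordinate. Joining each pair of positions to the pairs containing the values `σ` takes
on it gives a `2`-regular bipartite multigraph; Hall's theorem splits it into two perfect
matchings. Each matching tells in which entry of a position pair a signed permutation agrees with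
`σ`, the other entry being forced by the symmetry. The resulting `π₁, π₂ ∈ W_n` have
`M(π₁) + M(π₂) = M(σ) + (2n+1) - M(σ) ∘ rev`, which is twice the averaged point.
-/

open Function

namespace TypeB

variable {P : Type*}

def flipSnd (x : P × Bool) : P × Bool := (x.1, !x.2)

@[simp] lemma flipSnd_fst (x : P × Bool) : (flipSnd x).1 = x.1 := rfl

@[simp] lemma flipSnd_snd (x : P × Bool) : (flipSnd x).2 = !x.2 := rfl

@[simp] lemma flipSnd_flipSnd (x : P × Bool) : flipSnd (flipSnd x) = x := by
  simp [flipSnd]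

lemma flipSnd_ne (x : P × Bool) : flipSnd x ≠ x := fun h => by
  simpa using congrArg Prod.snd h

lemma eq_or_eq_or_eq_of_fst_perm_eq (σ : Equiv.Perm (P × Bool)) {x y z : P × Bool}
    (hxy : (σ x).1 = (σ y).1) (hxz : (σ x).1 = (σ z).1) : x = y ∨ x = z ∨ y = z := by
  have hBool : ∀ b₁ b₂ b₃ : Bool, b₁ = b₂ ∨ b₁ = b₃ ∨ b₂ = b₃ := by decide
  rcases hBool (σ x).2 (σ y).2 (σ z).2 with h | h | h
  · exact .inl (σ.injective (Prod.ext hxy h))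
  · exact .inr (.inl (σ.injective (Prod.ext hxz h)))
  · exact .inr (.inr (σ.injective (Prod.ext (hxy.symm.trans hxz) h)))

/-- Hall's theorem for the `2`-regular bipartite multigraph joining `p` to the first
coordinates of `σ (p, true)` and `σ (p, false)`. -/
lemma exists_injective_fst_perm_section [DecidableEq P] (σ : Equiv.Perm (P × Bool)) :
    ∃ χ : P → Bool, Injective fun p => (σ (p, χ p)).1 := by
  let t : P → Finset P := fun p => Finset.univ.image fun b => (σ (p, b)).1
  have hall : ∀ s : Finset P, s.card ≤ (s.biUnion t).card := by
    intro s
    have h : (s ×ˢ (Finset.univ : Finset Bool)).card ≤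
        ((s.biUnion t) ×ˢ (Finset.univ : Finset Bool)).card := by
      refine Finset.card_le_card_of_injOn σ (fun x hx => ?_) σ.injective.injOn
      simp only [Finset.coe_product, Set.mem_prod, Finset.mem_coe, Finset.mem_biUnion] at hx ⊢
      exact ⟨⟨x.1, hx.1, Finset.mem_image_of_mem _ (Finset.mem_univ _)⟩, Finset.mem_univ _⟩
    simpa using h
  obtain ⟨f, hf, hft⟩ := (Finset.all_card_le_biUnion_card_iff_exists_injective t).1 hall
  have hχ : ∀ p, ∃ b, (σ (p, b)).1 = f p := fun p => by
    obtain ⟨b, -, hb⟩ := Finset.mem_image.1 (hft p)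
    exact ⟨b, hb⟩
  choose χ hχ using hχ
  exact ⟨χ, by simpa only [hχ] using hf⟩

lemma injective_fst_perm_not_section [Finite P] (σ : Equiv.Perm (P × Bool)) {χ : P → Bool}
    (hχ : Injective fun p => (σ (p, χ p)).1) : Injective fun p => (σ (p, !χ p)).1 := by
  intro p q hpq
  by_contra hne
  obtain ⟨r, hr⟩ := Finite.injective_iff_surjective.1 hχ (σ (p, !χ p)).1
  rcases eq_or_eq_or_eq_of_fst_perm_eq σ hpq hr.symm with h | h | h
  · exact hne (congrArg Prod.fst h)
  all_goals obtain ⟨rfl, h⟩ := Prod.ext_iff.1 h; simp at h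

variable (σ : Equiv.Perm (P × Bool)) (χ : P → Bool)

def splice (x : P × Bool) : P × Bool :=
  if x.2 = χ x.1 then σ x else flipSnd (σ (flipSnd x))

lemma splice_flipSnd (x : P × Bool) : splice σ χ (flipSnd x) = flipSnd (splice σ χ x) := by
  by_cases h : x.2 = χ x.1
  · simp [splice, h]
  · simp [splice, h, Bool.not_eq_iff.2 h]

lemma fst_splice (x : P × Bool) : (splice σ χ x).1 = (σ (x.1, χ x.1)).1 := by
  by_cases h : x.2 = χ x.1
  · rw [splice, if_pos h, ← h]
  · simp [splice, h, flipSnd, Bool.not_eq_iff.2 h]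

lemma splice_injective (hχ : Injective fun p => (σ (p, χ p)).1) : Injective (splice σ χ) := by
  intro x y hxy
  have hfst : x.1 = y.1 := hχ (by simpa only [fst_splice] using congrArg Prod.fst hxy)
  by_cases hsnd : x.2 = y.2
  · exact Prod.ext hfst hsnd
  · have hy : y = flipSnd x := Prod.ext hfst.symm (Bool.eq_not_iff.2 (Ne.symm hsnd))
    rw [hy, splice_flipSnd] at hxy
    exact absurd hxy.symm (flipSnd_ne _)

lemma exists_flipSnd_equivariant_pair [Finite P] [DecidableEq P] :
    ∃ π₁ π₂ : Equiv.Perm (P × Bool),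
      (∀ x, π₁ (flipSnd x) = flipSnd (π₁ x)) ∧ (∀ x, π₂ (flipSnd x) = flipSnd (π₂ x)) ∧
      ∀ x, π₁ x = σ x ∧ π₂ x = flipSnd (σ (flipSnd x)) ∨
        π₁ x = flipSnd (σ (flipSnd x)) ∧ π₂ x = σ x := by
  obtain ⟨χ, hχ⟩ := exists_injective_fst_perm_section σ
  have bij (χ : P → Bool) (hχ : Injective fun p => (σ (p, χ p)).1) :
      Bijective (splice σ χ) :=
    Finite.injective_iff_bijective.1 (splice_injective σ χ hχ)
  refine ⟨.ofBijective _ (bij χ hχ),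
    .ofBijective _ (bij _ (injective_fst_perm_not_section σ hχ)),
    splice_flipSnd σ χ, splice_flipSnd σ (fun p => !χ p), fun x => ?_⟩
  simp only [Equiv.ofBijective_apply, splice]
  by_cases h : x.2 = χ x.1 <;> simp [h]

end TypeB

namespace Fin

def ofProdBool (n : ℕ) (x : Fin n × Bool) : Fin (2 * n) :=
  if x.2 then castLE (by omega) x.1 else (castLE (by omega) x.1).rev

lemma ofProdBool_flipSnd (n : ℕ) (x : Fin n × Bool) :
    ofProdBool n (TypeB.flipSnd x) = (ofProdBool n x).rev := by
  cases h : x.2 <;> simp [ofProdBool, h]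

lemma ofProdBool_injective (n : ℕ) : Function.Injective (ofProdBool n) := by
  rintro ⟨p, b⟩ ⟨q, c⟩ h
  have hp := p.isLt
  have hq := q.isLt
  cases b <;> cases c <;> simp [ofProdBool, Fin.ext_iff, Fin.val_rev] at h ⊢ <;> omega

lemma val_add_val_rev {m : ℕ} (a : Fin m) : (a : ℕ) + a.rev + 1 = m := by
  have := a.isLt
  rw [val_rev]
  omega

noncomputable def prodBoolEquiv (n : ℕ) : Fin n × Bool ≃ Fin (2 * n) :=
  .ofBijective (ofProdBool n) ((Fintype.bijective_iff_injective_and_card _).2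
    ⟨ofProdBool_injective n, by simp [mul_comm]⟩)

lemma prodBoolEquiv_symm_rev (n : ℕ) (a : Fin (2 * n)) :
    (prodBoolEquiv n).symm a.rev = TypeB.flipSnd ((prodBoolEquiv n).symm a) := by
  rw [Equiv.symm_apply_eq]
  conv_lhs => rw [← (prodBoolEquiv n).apply_symm_apply a]
  exact (ofProdBool_flipSnd n _).symm

lemma sum_two_mul {M : Type*} [AddCommMonoid M] (n : ℕ) (f : Fin (2 * n) → M) :
    ∑ a, f a = ∑ p : Fin n, (f (castLE (by omega) p) + f (castLE (by omega) p).rev) := by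
  rw [← (prodBoolEquiv n).sum_comp, Fintype.sum_prod_type]
  simp [prodBoolEquiv, ofProdBool]

lemma exists_rev_equivariant_pair (n : ℕ) (σ : Equiv.Perm (Fin (2 * n))) :
    ∃ π₁ π₂ : Equiv.Perm (Fin (2 * n)),
      (∀ a, π₁ a.rev = (π₁ a).rev) ∧ (∀ a, π₂ a.rev = (π₂ a).rev) ∧
      ∀ a, π₁ a = σ a ∧ π₂ a = (σ a.rev).rev ∨ π₁ a = (σ a.rev).rev ∧ π₂ a = σ a := by
  set e := prodBoolEquiv n
  have he : ∀ x, e (TypeB.flipSnd x) = (e x).rev := ofProdBool_flipSnd n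
  have he' : ∀ a, e.symm a.rev = TypeB.flipSnd (e.symm a) := prodBoolEquiv_symm_rev n
  obtain ⟨π₁, π₂, h₁, h₂, h⟩ := TypeB.exists_flipSnd_equivariant_pair (e.symm.permCongr σ)
  refine ⟨e.permCongr π₁, e.permCongr π₂, fun a => ?_, fun a => ?_, fun a => ?_⟩
  · simp only [Equiv.permCongr_apply, he', h₁, he]
  · simp only [Equiv.permCongr_apply, he', h₂, he]
  · simp only [Equiv.permCongr_apply]
    rcases h (e.symm a) with ⟨h₁, h₂⟩ | ⟨h₁, h₂⟩ <;> simp [h₁, h₂, he]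

end Fin

namespace TypeB

open Finset

variable {n : ℕ}

def permVec {m : ℕ} (σ : Equiv.Perm (Fin m)) : Fin m → ℝ := fun a => (σ a : ℝ) + 1

def permutahedronVertices (m : ℕ) : Set (Fin m → ℝ) :=
  {x | ∃ σ : Equiv.Perm (Fin m), x = fun a => (σ a : ℝ) + 1}

def typeBVertices (n : ℕ) : Set (Fin (2 * n) → ℝ) :=
  {x | ∃ σ : Equiv.Perm (Fin (2 * n)),
    (∀ a : Fin (2 * n), ((σ a : ℕ) + 1) + ((σ a.rev : ℕ) + 1) = 2 * n + 1) ∧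
    x = fun a => (σ a : ℝ) + 1}

lemma sum_permVec (σ : Equiv.Perm (Fin (2 * n))) : ∑ a, permVec σ a = n * (2 * n + 1) := by
  unfold permVec
  rw [Equiv.sum_comp σ (fun v => (v : ℝ) + 1), Fin.sum_two_mul]
  have h (v : Fin (2 * n)) : ((v : ℝ) + 1) + ((v.rev : ℝ) + 1) = 2 * n + 1 := by
    have : (v : ℝ) + v.rev + 1 = 2 * n := by exact_mod_cast Fin.val_add_val_rev v
    linarith
  simp only [h, sum_const, card_univ, Fintype.card_fin, nsmul_eq_mul]

lemma sum_eq_of_mem_convexHull {x : Fin (2 * n) → ℝ}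
    (hx : x ∈ convexHull ℝ (permutahedronVertices (2 * n))) : ∑ a, x a = n * (2 * n + 1) := by
  refine convexHull_min ?_ (convex_hyperplane ?_ _) hx
  · rintro _ ⟨σ, rfl⟩
    exact sum_permVec σ
  · exact ⟨fun x y => sum_add_distrib, fun c x => (mul_sum _ _ _).symm⟩

lemma forall_add_rev_eq {x : Fin (2 * n) → ℝ} (hsum : ∑ a, x a = n * (2 * n + 1))
    (hx : ∀ a : Fin (2 * n), (a : ℕ) < n - 1 → x a + x a.rev = 2 * n + 1) (a : Fin (2 * n)) :
    x a + x a.rev = 2 * n + 1 := by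
  let g : Fin n → ℝ := fun p => x (Fin.castLE (by omega) p) + x (Fin.castLE (by omega) p).rev
  have hg : ∀ p : Fin n, (p : ℕ) ≠ n - 1 → g p = 2 * n + 1 := fun p hp =>
    hx _ (by simp only [Fin.val_castLE]; omega)
  have hgall : ∀ p, g p = 2 * n + 1 := by
    intro p
    by_cases hp : (p : ℕ) = n - 1
    · have hdev : ∑ q, (g q - (2 * n + 1)) = 0 := by
        rw [sum_sub_distrib, ← Fin.sum_two_mul, hsum, sum_const, card_univ, Fintype.card_fin,
          nsmul_eq_mul]
        ring
      have hother : ∀ q ≠ p, g q - (2 * n + 1) = 0 := fun q hq =>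
        sub_eq_zero.2 (hg q fun h => hq (Fin.ext (h.trans hp.symm)))
      rwa [sum_eq_single p (fun q _ => hother q) (by simp), sub_eq_zero] at hdev
    · exact hg p hp
  by_cases ha : (a : ℕ) < n
  · exact hgall ⟨a, ha⟩
  · have h : x a.rev + x a.rev.rev = 2 * n + 1 :=
      hgall ⟨a.rev, by have := Fin.val_add_val_rev a; omega⟩
    rwa [Fin.rev_rev, add_comm] at h

lemma permVec_mem_typeBVertices {π : Equiv.Perm (Fin (2 * n))} (hπ : ∀ a, π a.rev = (π a).rev) :
    permVec π ∈ typeBVertices n :=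
  ⟨π, fun a => by rw [hπ]; have := Fin.val_add_val_rev (π a); omega, rfl⟩

/-- The midpoint of `x` and its reflection `x ↦ (2n + 1) - x ∘ rev`. -/
noncomputable def symmetrize (n : ℕ) : (Fin (2 * n) → ℝ) →ᵃ[ℝ] (Fin (2 * n) → ℝ) :=
  ((1 / 2 : ℝ) • (LinearMap.id - LinearMap.funLeft ℝ ℝ Fin.rev)).toAffineMap +
    AffineMap.const ℝ _ fun _ => (2 * n + 1 : ℝ) / 2

lemma symmetrize_apply (x : Fin (2 * n) → ℝ) (a : Fin (2 * n)) :
    symmetrize n x a = (x a + (2 * n + 1) - x a.rev) / 2 := by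
  simp [symmetrize]
  ring

lemma symmetrize_eq_self {x : Fin (2 * n) → ℝ} (hx : ∀ a, x a + x a.rev = 2 * n + 1) :
    symmetrize n x = x := by
  ext a
  rw [symmetrize_apply]
  linarith [hx a]

lemma symmetrize_permVec_mem (σ : Equiv.Perm (Fin (2 * n))) :
    symmetrize n (permVec σ) ∈ convexHull ℝ (typeBVertices n) := by
  obtain ⟨π₁, π₂, h₁, h₂, h⟩ := Fin.exists_rev_equivariant_pair n σ
  have hmid := convex_convexHull ℝ (typeBVertices n)
    (subset_convexHull ℝ _ (permVec_mem_typeBVertices h₁))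
    (subset_convexHull ℝ _ (permVec_mem_typeBVertices h₂))
    (by norm_num : (0 : ℝ) ≤ 1 / 2) (by norm_num : (0 : ℝ) ≤ 1 / 2) (add_halves 1)
  convert hmid using 1
  ext a
  have hrev : (σ a.rev : ℝ) + (σ a.rev).rev + 1 = 2 * n := by
    exact_mod_cast Fin.val_add_val_rev (σ a.rev)
  rw [symmetrize_apply]
  rcases h a with ⟨ha₁, ha₂⟩ | ⟨ha₁, ha₂⟩ <;>
  · simp only [permVec, Pi.add_apply, Pi.smul_apply, smul_eq_mul, ha₁, ha₂]
    linarith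

lemma symmetrize_image_convexHull_subset :
    symmetrize n '' convexHull ℝ (permutahedronVertices (2 * n)) ⊆
      convexHull ℝ (typeBVertices n) := by
  rw [AffineMap.image_convexHull]
  refine convexHull_min ?_ (convex_convexHull ℝ _)
  rintro _ ⟨_, ⟨σ, rfl⟩, rfl⟩
  exact symmetrize_permVec_mem σ

lemma convex_setOf_add_rev_eq (s : Set (Fin (2 * n))) (c : ℝ) :
    Convex ℝ {x : Fin (2 * n) → ℝ | ∀ a ∈ s, x a + x a.rev = c} := by
  intro x hx y hy t u ht hu htu a ha
  simp only [Pi.add_apply, Pi.smul_apply, smul_eq_mul]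
  linear_combination t * hx a ha + u * hy a ha + c * htu

end TypeB

/-- `Perm(Bₙ) = Perm(A_{2n-1}) ∩ ⋂_{i ∈ [n-1]} H_i^B`, where
`Perm(Bₙ) = conv{M(σ) : σ ∈ Wₙ}`, `Perm(A_{2n-1}) = conv{M(σ) : σ ∈ S_{2n}}`, and
`H_i^B = {x ∈ ℝ^{2n} : x_i + x_{2n+1−i} = 2n+1}`. -/
theorem typeB_permutahedron_eq_intersection (n : ℕ) :
    convexHull ℝ {x : Fin (2 * n) → ℝ | ∃ σ : Equiv.Perm (Fin (2 * n)),
        (∀ a : Fin (2 * n), ((σ a : ℕ) + 1) + ((σ a.rev : ℕ) + 1) = 2 * n + 1) ∧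
        x = fun a => (σ a : ℝ) + 1} =
      (convexHull ℝ {x : Fin (2 * n) → ℝ | ∃ σ : Equiv.Perm (Fin (2 * n)),
          x = fun a => (σ a : ℝ) + 1}) ∩
        {x : Fin (2 * n) → ℝ | ∀ a : Fin (2 * n), (a : ℕ) < n - 1 →
          x a + x a.rev = 2 * n + 1} := by
  apply Set.Subset.antisymm
  · refine convexHull_min ?_ ((convex_convexHull ℝ _).inter
      (TypeB.convex_setOf_add_rev_eq {a | (a : ℕ) < n - 1} (2 * n + 1)))
    rintro _ ⟨σ, hσ, rfl⟩
    exact ⟨subset_convexHull ℝ _ ⟨σ, rfl⟩, fun a _ => by beta_reduce; exact_mod_cast hσ a⟩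
  · rintro x ⟨hxA, hxH⟩
    have hx : ∀ a, x a + x a.rev = 2 * n + 1 :=
      TypeB.forall_add_rev_eq (TypeB.sum_eq_of_mem_convexHull hxA) hxH
    rw [← TypeB.symmetrize_eq_self hx]
    exact TypeB.symmetrize_image_convexHull_subset ⟨x, hxA, rfl⟩
end

section
/- Let T be a triangulation of a convex (m+2)-gon with vertices labelled 0,1,...,m+1 (as an abstract set of m−1 pairwise non-crossing diagonals together with the boundary edges). For each i ∈ [m], there exist unique a and b with 0 ≤ a < i < b ≤ m+1 such that {a, i, b} is a triangle of T realizing a = argmax over left neighbors and b = argmax over right neighbors; consequently T has exactly m triangles and the map i ↦ Δ_i = {a_i, i, b_i} is injective onto the set of triangles of T. -/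
open Finset

attribute [local instance] Classical.propDecidable

/-- `(a, b)` with `a < b` is a diagonal of the convex `N`-gon with vertices `0, …, N−1`. -/
def IsPolyDiag (N : ℕ) (e : ℕ × ℕ) : Prop :=
  e.1 < e.2 ∧ e.2 ≤ N - 1 ∧ e.1 + 2 ≤ e.2 ∧ ¬(e.1 = 0 ∧ e.2 = N - 1)

/-- Two diagonals (each given with increasing endpoints) cross. -/
def PolyCross (e f : ℕ × ℕ) : Prop :=
  (e.1 < f.1 ∧ f.1 < e.2 ∧ e.2 < f.2) ∨ (f.1 < e.1 ∧ e.1 < f.2 ∧ f.2 < e.2)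

/-- A triangulation of the convex `N`-gon: a maximal set of pairwise non-crossing
diagonals. -/
def IsPolyTriangulation (N : ℕ) (T : Finset (ℕ × ℕ)) : Prop :=
  (∀ e ∈ T, IsPolyDiag N e) ∧
  (∀ e ∈ T, ∀ f ∈ T, ¬ PolyCross e f) ∧
  (∀ e : ℕ × ℕ, IsPolyDiag N e → e ∉ T → ∃ f ∈ T, PolyCross e f)

/-- `a` and `b` are joined by an edge: a boundary edge or a diagonal of `T`. -/
def PolyEdge (N : ℕ) (T : Finset (ℕ × ℕ)) (a b : ℕ) : Prop :=
  (a, b) ∈ T ∨ (b, a) ∈ T ∨ a + 1 = b ∨ b + 1 = a ∨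
    (a = 0 ∧ b = N - 1) ∨ (b = 0 ∧ a = N - 1)

/-- The triangles of the triangulation. -/
noncomputable def PolyTriangles (N : ℕ) (T : Finset (ℕ × ℕ)) : Finset (Finset ℕ) :=
  ((Finset.range N).powersetCard 3).filter
    (fun s => ∀ x ∈ s, ∀ y ∈ s, x < y → PolyEdge N T x y)

section Aux

variable {m : ℕ} {T : Finset (ℕ × ℕ)}

lemma edge_mem (hT : IsPolyTriangulation (m + 2) T) {a b : ℕ} (hab : a < b)
    (h : PolyEdge (m + 2) T a b) :
    (a, b) ∈ T ∨ a + 1 = b ∨ (a = 0 ∧ b = m + 1) := by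
  rcases h with h | h | h | h | h | h
  · exact Or.inl h
  · have := (hT.1 _ h).1
    simp only at this
    omega
  · exact Or.inr (Or.inl h)
  · omega
  · exact Or.inr (Or.inr ⟨h.1, by omega⟩)
  · omega

lemma no_cross (hT : IsPolyTriangulation (m + 2) T) {a b c d : ℕ}
    (h1 : a < c) (h2 : c < b) (h3 : b < d)
    (e1 : PolyEdge (m + 2) T a b) (e2 : PolyEdge (m + 2) T c d) : False := by
  rcases edge_mem hT (by omega) e1 with h | h | h
  · rcases edge_mem hT (by omega) e2 with g | g | g
    · exact hT.2.1 _ h _ g (Or.inl ⟨h1, h2, h3⟩)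
    · omega
    · omega
  · omega
  · -- a = 0, b = m + 1, so d > m + 1
    rcases edge_mem hT (by omega) e2 with g | g | g
    · have := (hT.1 _ g).2.1
      simp only at this
      omega
    · omega
    · omega

lemma edge_extreme (hT : IsPolyTriangulation (m + 2) T) {i a b : ℕ}
    (hai : a < i) (hea : PolyEdge (m + 2) T a i)
    (hib : i < b) (hb2 : b ≤ m + 1) (heb : PolyEdge (m + 2) T i b)
    (hmin : ∀ a', a' < i → PolyEdge (m + 2) T a' i → a ≤ a')
    (hmax : ∀ b', i < b' → b' ≤ m + 1 → PolyEdge (m + 2) T i b' → b' ≤ b) :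
    PolyEdge (m + 2) T a b := by
  by_contra h
  have hdiag : IsPolyDiag (m + 2) (a, b) := by
    refine ⟨by omega, by omega, by omega, ?_⟩
    intro hc
    exact h (Or.inr (Or.inr (Or.inr (Or.inr (Or.inl (by omega))))))
  have hnT : (a, b) ∉ T := fun hc => h (Or.inl hc)
  obtain ⟨f, hfT, hcross⟩ := hT.2.2 _ hdiag hnT
  have hfd := hT.1 _ hfT
  have hf12 : f.1 < f.2 := hfd.1
  have hf2 : f.2 ≤ m + 1 := by have := hfd.2.1; omega
  have hef : PolyEdge (m + 2) T f.1 f.2 := Or.inl (by simpa using hfT)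
  rcases hcross with ⟨h1, h2, h3⟩ | ⟨h1, h2, h3⟩
  · -- a < f.1, f.1 < b, b < f.2
    rcases lt_trichotomy f.1 i with hc | hc | hc
    · exact no_cross hT h1 hc (by omega) hea hef
    · have := hmax f.2 (by omega) hf2 (hc ▸ hef)
      omega
    · exact no_cross hT hc h2 h3 heb hef
  · -- f.1 < a, a < f.2, f.2 < b
    rcases lt_trichotomy f.2 i with hc | hc | hc
    · exact no_cross hT h1 h2 hc hef hea
    · have := hmin f.1 (by omega) (hc ▸ hef)
      omega
    · exact no_cross hT (by omega) hc h3 hef heb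

lemma tri_mem (hT : IsPolyTriangulation (m + 2) T) {i a b : ℕ}
    (hai : a < i) (hib : i < b) (hb2 : b ≤ m + 1)
    (hea : PolyEdge (m + 2) T a i) (heb : PolyEdge (m + 2) T i b)
    (heab : PolyEdge (m + 2) T a b) :
    ({a, i, b} : Finset ℕ) ∈ PolyTriangles (m + 2) T := by
  simp only [PolyTriangles, mem_filter, mem_powersetCard]
  refine ⟨⟨?_, ?_⟩, ?_⟩
  · intro x hx
    simp only [mem_insert, mem_singleton] at hx
    rw [mem_range]
    rcases hx with rfl | rfl | rfl <;> omega
  · rw [card_eq_three]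
    exact ⟨a, i, b, by omega, by omega, by omega, rfl⟩
  · intro x hx y hy hxy
    simp only [mem_insert, mem_singleton] at hx hy
    rcases hx with rfl | rfl | rfl <;> rcases hy with rfl | rfl | rfl <;>
      first
        | exact hea
        | exact heb
        | exact heab
        | exact absurd hxy (by omega)

lemma sorted_three {s : Finset ℕ} (h : s.card = 3) :
    ∃ x y z : ℕ, x < y ∧ y < z ∧ s = {x, y, z} := by
  obtain ⟨a, b, c, hab, hac, hbc, rfl⟩ := Finset.card_eq_three.mp h
  refine ⟨min a (min b c), a + b + c - min a (min b c) - max a (max b c),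
    max a (max b c), by omega, by omega, ?_⟩
  ext t
  simp only [mem_insert, mem_singleton]
  omega

lemma triple_eq {x y z x' y' z' : ℕ} (h1 : x < y) (h2 : y < z)
    (h1' : x' < y') (h2' : y' < z')
    (h : ({x, y, z} : Finset ℕ) = {x', y', z'}) : x = x' ∧ y = y' ∧ z = z' := by
  have hmem : ∀ t : ℕ, (t = x ∨ t = y ∨ t = z) ↔ (t = x' ∨ t = y' ∨ t = z') := by
    intro t
    have := Finset.ext_iff.mp h t
    simpa using this
  have e1 := (hmem x).mp (Or.inl rfl)
  have e2 := (hmem y).mp (Or.inr (Or.inl rfl))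
  have e3 := (hmem z).mp (Or.inr (Or.inr rfl))
  have f1 := (hmem x').mpr (Or.inl rfl)
  have f2 := (hmem y').mpr (Or.inr (Or.inl rfl))
  have f3 := (hmem z').mpr (Or.inr (Or.inr rfl))
  omega

lemma mid_unique (hT : IsPolyTriangulation (m + 2) T) {x y z a b : ℕ}
    (hs : ({x, y, z} : Finset ℕ) ∈ PolyTriangles (m + 2) T)
    (hxy : x < y) (hyz : y < z)
    (ha : a < y) (hea : PolyEdge (m + 2) T a y)
    (hmin : ∀ a', a' < y → PolyEdge (m + 2) T a' y → a ≤ a')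
    (hb : y < b) (hb2 : b ≤ m + 1) (heb : PolyEdge (m + 2) T y b)
    (hmax : ∀ b', y < b' → b' ≤ m + 1 → PolyEdge (m + 2) T y b' → b' ≤ b) :
    a = x ∧ b = z := by
  simp only [PolyTriangles, mem_filter, mem_powersetCard] at hs
  have hz2 : z ≤ m + 1 := by
    have := hs.1.1 (by simp : z ∈ ({x, y, z} : Finset ℕ))
    rw [mem_range] at this
    omega
  have hexy : PolyEdge (m + 2) T x y := hs.2 x (by simp) y (by simp) hxy
  have heyz : PolyEdge (m + 2) T y z := hs.2 y (by simp) z (by simp) hyz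
  have hexz : PolyEdge (m + 2) T x z := hs.2 x (by simp) z (by simp) (hxy.trans hyz)
  constructor
  · have hle : a ≤ x := hmin x hxy hexy
    by_contra hne
    have hax : a < x := by omega
    exact no_cross hT hax hxy hyz hea hexz
  · have hle : z ≤ b := hmax z hyz hz2 heyz
    by_contra hne
    have hzb : z < b := by omega
    exact no_cross hT hxy hyz hzb hexz heb

end Aux

/-- Let `T` be a triangulation of a convex `(m+2)`-gon with vertices labelled
`0, 1, …, m+1` in cyclic order.  For each `i ∈ [m]` there exist **unique** `a, b` with
`a < i < b ≤ m+1` such that `{a, i, b}` is a triangle of `T` realizing the argmax of the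
distance `μ_i` over left resp. right neighbours of `i` (for the standard labelling this
means `a` is the smallest left neighbour and `b` the largest right neighbour).
Consequently `T` has exactly `m` triangles, and the map `i ↦ Δ_i = {a_i, i, b_i}` is
injective with image the set of triangles of `T`. -/
theorem triangle_map_bijective (m : ℕ) (hm : 1 ≤ m) (T : Finset (ℕ × ℕ))
    (hT : IsPolyTriangulation (m + 2) T) :
    (∀ i : ℕ, 1 ≤ i → i ≤ m →
      ∃! p : ℕ × ℕ,
        p.1 < i ∧ i < p.2 ∧ p.2 ≤ m + 1 ∧
        ({p.1, i, p.2} : Finset ℕ) ∈ PolyTriangles (m + 2) T ∧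
        (∀ a : ℕ, a < i → PolyEdge (m + 2) T a i → p.1 ≤ a) ∧
        (∀ b : ℕ, i < b → b ≤ m + 1 → PolyEdge (m + 2) T i b → b ≤ p.2)) ∧
    (PolyTriangles (m + 2) T).card = m ∧
    (∀ A B : ℕ → ℕ,
      (∀ i : ℕ, 1 ≤ i → i ≤ m →
        (A i < i ∧ PolyEdge (m + 2) T (A i) i ∧
          (∀ a : ℕ, a < i → PolyEdge (m + 2) T a i → A i ≤ a)) ∧
        (i < B i ∧ B i ≤ m + 1 ∧ PolyEdge (m + 2) T i (B i) ∧
          (∀ b : ℕ, i < b → b ≤ m + 1 → PolyEdge (m + 2) T i b → b ≤ B i))) →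
      Set.InjOn (fun i => ({A i, i, B i} : Finset ℕ)) (Set.Icc 1 m) ∧
      (Finset.Icc 1 m).image (fun i => ({A i, i, B i} : Finset ℕ)) =
        PolyTriangles (m + 2) T) := by
  -- Part 1: existence and uniqueness
  have hpart1 : ∀ i : ℕ, 1 ≤ i → i ≤ m →
      ∃! p : ℕ × ℕ,
        p.1 < i ∧ i < p.2 ∧ p.2 ≤ m + 1 ∧
        ({p.1, i, p.2} : Finset ℕ) ∈ PolyTriangles (m + 2) T ∧
        (∀ a : ℕ, a < i → PolyEdge (m + 2) T a i → p.1 ≤ a) ∧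
        (∀ b : ℕ, i < b → b ≤ m + 1 → PolyEdge (m + 2) T i b → b ≤ p.2) := by
    intro i hi1 hi2
    have hAne : ((range i).filter (fun x => PolyEdge (m + 2) T x i)).Nonempty := by
      refine ⟨i - 1, ?_⟩
      rw [mem_filter, mem_range]
      exact ⟨by omega, Or.inr (Or.inr (Or.inl (by omega)))⟩
    have hBne : ((Icc (i + 1) (m + 1)).filter (fun x => PolyEdge (m + 2) T i x)).Nonempty := by
      refine ⟨i + 1, ?_⟩
      rw [mem_filter, mem_Icc]
      exact ⟨⟨le_refl _, by omega⟩, Or.inr (Or.inr (Or.inl rfl))⟩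
    set a := ((range i).filter (fun x => PolyEdge (m + 2) T x i)).min' hAne with ha_def
    set b := ((Icc (i + 1) (m + 1)).filter (fun x => PolyEdge (m + 2) T i x)).max' hBne
      with hb_def
    have ha_mem := Finset.min'_mem _ hAne
    rw [mem_filter, mem_range, ← ha_def] at ha_mem
    have hb_mem := Finset.max'_mem _ hBne
    rw [mem_filter, mem_Icc, ← hb_def] at hb_mem
    have hmin : ∀ a', a' < i → PolyEdge (m + 2) T a' i → a ≤ a' := by
      intro a' h1 h2
      have hmem : a' ∈ (range i).filter (fun x => PolyEdge (m + 2) T x i) :=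
        mem_filter.mpr ⟨mem_range.mpr h1, h2⟩
      exact Finset.min'_le _ _ hmem
    have hmax : ∀ b', i < b' → b' ≤ m + 1 → PolyEdge (m + 2) T i b' → b' ≤ b := by
      intro b' h1 h2 h3
      have hmem : b' ∈ (Icc (i + 1) (m + 1)).filter (fun x => PolyEdge (m + 2) T i x) :=
        mem_filter.mpr ⟨mem_Icc.mpr ⟨by omega, h2⟩, h3⟩
      exact Finset.le_max' _ _ hmem
    have heab : PolyEdge (m + 2) T a b :=
      edge_extreme hT ha_mem.1 ha_mem.2 (by omega) hb_mem.1.2 hb_mem.2 hmin hmax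
    have htri := tri_mem hT ha_mem.1 (show i < b by omega) hb_mem.1.2 ha_mem.2 hb_mem.2 heab
    refine ⟨(a, b), ⟨ha_mem.1, by omega, hb_mem.1.2, htri, hmin, hmax⟩, ?_⟩
    rintro ⟨q1, q2⟩ ⟨hq1, hq2, hq3, hqtri, hqmin, hqmax⟩
    simp only [PolyTriangles, mem_filter] at hqtri
    have hqe1 : PolyEdge (m + 2) T q1 i := hqtri.2 q1 (by simp) i (by simp) hq1
    have hqe2 : PolyEdge (m + 2) T i q2 := hqtri.2 i (by simp) q2 (by simp) hq2
    have c1 : q1 ≤ a := hqmin a ha_mem.1 ha_mem.2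
    have c2 : a ≤ q1 := hmin q1 hq1 hqe1
    have c3 : b ≤ q2 := hqmax b (by omega) hb_mem.1.2 hb_mem.2
    have c4 : q2 ≤ b := hmax q2 hq2 hq3 hqe2
    rw [Prod.mk.injEq]
    omega
  -- Part 3: injectivity and surjectivity for any argmin/argmax functions
  have hpart3 : ∀ A B : ℕ → ℕ,
      (∀ i : ℕ, 1 ≤ i → i ≤ m →
        (A i < i ∧ PolyEdge (m + 2) T (A i) i ∧
          (∀ a : ℕ, a < i → PolyEdge (m + 2) T a i → A i ≤ a)) ∧
        (i < B i ∧ B i ≤ m + 1 ∧ PolyEdge (m + 2) T i (B i) ∧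
          (∀ b : ℕ, i < b → b ≤ m + 1 → PolyEdge (m + 2) T i b → b ≤ B i))) →
      Set.InjOn (fun i => ({A i, i, B i} : Finset ℕ)) (Set.Icc 1 m) ∧
      (Finset.Icc 1 m).image (fun i => ({A i, i, B i} : Finset ℕ)) =
        PolyTriangles (m + 2) T := by
    intro A B hAB
    have htriAB : ∀ i, 1 ≤ i → i ≤ m →
        ({A i, i, B i} : Finset ℕ) ∈ PolyTriangles (m + 2) T := by
      intro i h1 h2
      obtain ⟨⟨ha1, ha2, ha3⟩, hb1, hb2, hb3, hb4⟩ := hAB i h1 h2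
      exact tri_mem hT ha1 hb1 hb2 ha2 hb3
        (edge_extreme hT ha1 ha2 hb1 hb2 hb3 ha3 hb4)
    constructor
    · intro i hi j hj he
      simp only [Set.mem_Icc] at hi hj
      obtain ⟨⟨ha1, _⟩, hb1, _⟩ := hAB i hi.1 hi.2
      obtain ⟨⟨ha1', _⟩, hb1', _⟩ := hAB j hj.1 hj.2
      have he' : ({A i, i, B i} : Finset ℕ) = {A j, j, B j} := he
      exact (triple_eq ha1 hb1 ha1' hb1' he').2.1
    · ext s
      simp only [mem_image, mem_Icc]
      constructor
      · rintro ⟨i, ⟨h1, h2⟩, rfl⟩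
        exact htriAB i h1 h2
      · intro hs
        have hcard : s.card = 3 := by
          simp only [PolyTriangles, mem_filter, mem_powersetCard] at hs
          exact hs.1.2
        obtain ⟨x, y, z, hxy, hyz, rfl⟩ := sorted_three hcard
        have hz2 : z ≤ m + 1 := by
          simp only [PolyTriangles, mem_filter, mem_powersetCard] at hs
          have := hs.1.1 (by simp : z ∈ ({x, y, z} : Finset ℕ))
          rw [mem_range] at this
          omega
        have hy1 : 1 ≤ y := by omega
        have hy2 : y ≤ m := by omega
        obtain ⟨⟨ha1, ha2, ha3⟩, hb1, hb2, hb3, hb4⟩ := hAB y hy1 hy2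
        obtain ⟨hax, hbz⟩ := mid_unique hT hs hxy hyz ha1 ha2 ha3 hb1 hb2 hb3 hb4
        refine ⟨y, ⟨hy1, hy2⟩, ?_⟩
        show ({A y, y, B y} : Finset ℕ) = {x, y, z}
        rw [hax, hbz]
  -- Part 2: cardinality, via a choice of argmin/argmax functions
  choose! P hP using fun i h1 h2 => (hpart1 i h1 h2).exists
  have hspec : ∀ i : ℕ, 1 ≤ i → i ≤ m →
      ((fun i => (P i).1) i < i ∧ PolyEdge (m + 2) T ((fun i => (P i).1) i) i ∧
        (∀ a : ℕ, a < i → PolyEdge (m + 2) T a i → (fun i => (P i).1) i ≤ a)) ∧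
      (i < (fun i => (P i).2) i ∧ (fun i => (P i).2) i ≤ m + 1 ∧
        PolyEdge (m + 2) T i ((fun i => (P i).2) i) ∧
        (∀ b : ℕ, i < b → b ≤ m + 1 → PolyEdge (m + 2) T i b → b ≤ (fun i => (P i).2) i)) := by
    intro i h1 h2
    obtain ⟨g1, g2, g3, gtri, gmin, gmax⟩ := hP i h1 h2
    simp only [PolyTriangles, mem_filter] at gtri
    have ge1 : PolyEdge (m + 2) T (P i).1 i := gtri.2 (P i).1 (by simp) i (by simp) g1
    have ge2 : PolyEdge (m + 2) T i (P i).2 := gtri.2 i (by simp) (P i).2 (by simp) g2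
    exact ⟨⟨g1, ge1, gmin⟩, g2, g3, ge2, gmax⟩
  obtain ⟨hinj, himg⟩ := hpart3 (fun i => (P i).1) (fun i => (P i).2) hspec
  refine ⟨hpart1, ?_, hpart3⟩
  rw [← himg, Finset.card_image_of_injOn (by rw [Finset.coe_Icc]; exact hinj), Nat.card_Icc]
  omega
end

section
/- Fix an orientation 𝒜 of the Coxeter graph A_{n-1}, with down set D_𝒜 ⊆ [n] containing 1 and n and up set U_𝒜 = [n] ∖ D_𝒜. For every u with 1 ≤ u ≤ n−1, there exists a diagonal D of the (n+2)-gon labelled according to 𝒜 such that K_𝒜(D) = {1, 2, ..., u}; similarly for every v with 0 ≤ v ≤ n−2 there is a diagonal with K_𝒜(D) = {n−v, ..., n−1, n}. -/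
open Finset

attribute [local instance] Classical.propDecidable

/- Throughout, an orientation `𝒜` of the Coxeter graph `A_{n-1}` is encoded by its set
`U` of up elements, a subset of `{2, …, n−1}`; the down elements are `[n] ∖ U` together
with the conventions that `0` and `n+1` behave like down elements.  The `(n+2)`-gon `P`
is labelled accordingly: counterclockwise one reads `0`, the down elements in increasing
order, `n+1`, then the up elements in decreasing order. -/

/-- The position (counterclockwise, starting at `0`) of the vertex of the labelled
`(n+2)`-gon carrying the label `k ∈ {0, …, n+1}`. -/
def lblPos (n : ℕ) (U : Finset ℕ) (k : ℕ) : ℕ :=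
  if k ∈ U then (n + 1 - U.card) + (U.filter (fun m => k ≤ m)).card
  else ((Finset.Icc 1 k).filter (fun m => m ∉ U)).card

/-- Labels `a` and `b` are adjacent on the boundary of the labelled `(n+2)`-gon. -/
def BndEdge (n : ℕ) (U : Finset ℕ) (a b : ℕ) : Prop :=
  lblPos n U a + 1 = lblPos n U b ∨ lblPos n U b + 1 = lblPos n U a ∨
    (lblPos n U a = 0 ∧ lblPos n U b = n + 1) ∨
    (lblPos n U b = 0 ∧ lblPos n U a = n + 1)

/-- `(a, b)` is a diagonal of the labelled `(n+2)`-gon: a pair of distinct,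
non-adjacent labels. -/
def IsDiag (n : ℕ) (U : Finset ℕ) (e : ℕ × ℕ) : Prop :=
  e.1 ≤ n + 1 ∧ e.2 ≤ n + 1 ∧ e.1 ≠ e.2 ∧ ¬ BndEdge n U e.1 e.2

/-- Two diagonals of the labelled `(n+2)`-gon cross (computed via the positions of
their endpoints). -/
def DiagCross (n : ℕ) (U : Finset ℕ) (e f : ℕ × ℕ) : Prop :=
  ((min (lblPos n U e.1) (lblPos n U e.2) < min (lblPos n U f.1) (lblPos n U f.2)) ∧
     (min (lblPos n U f.1) (lblPos n U f.2) < max (lblPos n U e.1) (lblPos n U e.2)) ∧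
     (max (lblPos n U e.1) (lblPos n U e.2) < max (lblPos n U f.1) (lblPos n U f.2))) ∨
  ((min (lblPos n U f.1) (lblPos n U f.2) < min (lblPos n U e.1) (lblPos n U e.2)) ∧
     (min (lblPos n U e.1) (lblPos n U e.2) < max (lblPos n U f.1) (lblPos n U f.2)) ∧
     (max (lblPos n U f.1) (lblPos n U f.2) < max (lblPos n U e.1) (lblPos n U e.2)))

/-- A triangulation of the labelled `(n+2)`-gon, recorded as its set of `n−1` pairwise
non-crossing diagonals `(a, b)` with `a < b`. -/
def IsTriang (n : ℕ) (U : Finset ℕ) (T : Finset (ℕ × ℕ)) : Prop :=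
  (∀ e ∈ T, e.1 < e.2 ∧ IsDiag n U e) ∧
  (∀ e ∈ T, ∀ f ∈ T, ¬ DiagCross n U e f) ∧
  T.card = n - 1

/-- `{a, b}` is an edge of the triangulation `T` (a diagonal or a boundary edge). -/
def TEdge (n : ℕ) (U : Finset ℕ) (T : Finset (ℕ × ℕ)) (a b : ℕ) : Prop :=
  (a, b) ∈ T ∨ (b, a) ∈ T ∨ BndEdge n U a b

/-- Linear coordinate of a label `k ≤ i` along the boundary path of `P` through the
labels `≤ i` (the arc around the vertex labelled `0`). -/
def piLow (n : ℕ) (U : Finset ℕ) (k : ℕ) : ℤ :=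
  if k ∈ U then -(((U.filter (fun m => m ≤ k)).card : ℤ))
  else (((Finset.Icc 1 k).filter (fun m => m ∉ U)).card : ℤ)

/-- Linear coordinate of a label `k ≥ i` along the boundary path of `P` through the
labels `≥ i` (the arc around the vertex labelled `n+1`). -/
def piHigh (n : ℕ) (U : Finset ℕ) (k : ℕ) : ℤ :=
  if k ∈ U then -(((U.filter (fun m => k ≤ m)).card : ℤ))
  else (((Finset.Icc k n).filter (fun m => m ∉ U)).card : ℤ)

/-- The distance function `μ_i(j)`: for `j < i` the number of edges of the boundary
path connecting `i` and `j` using only labels `≤ i`; for `j ≥ i` the number of edges of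
the boundary path connecting `i` and `j` using only labels `≥ i`. -/
def muD (n : ℕ) (U : Finset ℕ) (i j : ℕ) : ℕ :=
  if j < i then (piLow n U i - piLow n U j).natAbs
  else (piHigh n U i - piHigh n U j).natAbs

/-- `p_ℓ^T(i)`: the maximum of `μ_i(a)` over all `a < i` with `{a, i}` an edge of `T`. -/
noncomputable def pl (n : ℕ) (U : Finset ℕ) (T : Finset (ℕ × ℕ)) (i : ℕ) : ℕ :=
  ((Finset.range i).filter (fun a => TEdge n U T a i)).sup (muD n U i)

/-- `p_r^T(i)`: the maximum of `μ_i(b)` over all `b > i` with `{b, i}` an edge of `T`. -/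
noncomputable def pr (n : ℕ) (U : Finset ℕ) (T : Finset (ℕ × ℕ)) (i : ℕ) : ℕ :=
  ((Finset.Icc (i + 1) (n + 1)).filter (fun b => TEdge n U T i b)).sup (muD n U i)

/-- The weight `ω_i = p_ℓ^T(i) · p_r^T(i)`. -/
noncomputable def weightW (n : ℕ) (U : Finset ℕ) (T : Finset (ℕ × ℕ)) (i : ℕ) : ℕ :=
  pl n U T i * pr n U T i

/-- The `i`-th coordinate of `M_𝒜(T)`: `ω_i` if `i` is down, `n + 1 − ω_i` if `i` is
up. -/
noncomputable def Mcoord (n : ℕ) (U : Finset ℕ) (T : Finset (ℕ × ℕ)) (i : ℕ) : ℤ :=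
  if i ∈ U then (n : ℤ) + 1 - (weightW n U T i : ℤ) else (weightW n U T i : ℤ)

/-- The map `K_𝒜` assigning to a diagonal `{a, b}` (`a < b`) of the labelled
`(n+2)`-gon a subset of `[n]`: the labels read counterclockwise from `a` to `b`, with
`0`, `n+1` and `{a, b} ∩ D_𝒜` removed. -/
def KofD (n : ℕ) (U : Finset ℕ) (a b : ℕ) : Finset ℕ :=
  if a ∈ U then
    (if b ∈ U then
      ((Finset.Icc 1 n).filter (fun i => i ∉ U)) ∪
        (U.filter (fun i => i ≤ a ∨ b ≤ i))
    else
      ((Finset.Ico 1 b).filter (fun i => i ∉ U)) ∪ (U.filter (fun i => i ≤ a)))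
  else
    (if b ∈ U then
      ((Finset.Ioc a n).filter (fun i => i ∉ U)) ∪ (U.filter (fun i => b ≤ i))
    else
      (Finset.Ioo a b).filter (fun i => i ∉ U))

/-- For any orientation of `A_{n-1}` (with up set `U ⊆ {2,…,n−1}`) and any
`1 ≤ u ≤ n−1` there is a diagonal `D` of the labelled `(n+2)`-gon with
`K_𝒜(D) = {1, …, u}`; similarly for `0 ≤ v ≤ n−2` there is a diagonal with
`K_𝒜(D) = {n−v, …, n}`. -/
theorem initial_and_final_segments_admissible (n : ℕ) (hn : 2 ≤ n) (U : Finset ℕ)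
    (hU : ∀ k ∈ U, 1 < k ∧ k < n) :
    (∀ u : ℕ, 1 ≤ u → u ≤ n - 1 →
      ∃ a b : ℕ, a < b ∧ IsDiag n U (a, b) ∧ KofD n U a b = Finset.Icc 1 u) ∧
    (∀ v : ℕ, v ≤ n - 2 →
      ∃ a b : ℕ, a < b ∧ IsDiag n U (a, b) ∧ KofD n U a b = Finset.Icc (n - v) n) := by

  classical
  have h0U : 0 ∉ U := fun h => by have := (hU 0 h).1; omega
  have h1U : 1 ∉ U := fun h => by have := (hU 1 h).1; omega
  have hnU : n ∉ U := fun h => by have := (hU n h).2; omega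
  have hn1U : n + 1 ∉ U := fun h => by have := (hU (n+1) h).2; omega
  have hcardU : U.card + 2 ≤ n := by
    have hsub : U ⊆ Finset.Icc 2 (n-1) := fun k hk => by
      have := hU k hk; rw [Finset.mem_Icc]; omega
    have := Finset.card_le_card hsub
    rw [Nat.card_Icc] at this; omega
  have hUsub' : U ⊆ Finset.Icc 1 n := fun k hk => by
    have := hU k hk; rw [Finset.mem_Icc]; omega
  have hDn : ((Finset.Icc 1 n).filter (fun k => k ∉ U)).card + U.card = n := by
    have heq : (Finset.Icc 1 n).filter (fun k => k ∉ U) = Finset.Icc 1 n \ U := by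
      ext k; simp [Finset.mem_sdiff, Finset.mem_filter]
    rw [heq, Finset.card_sdiff_of_subset hUsub', Nat.card_Icc]
    have := Finset.card_le_card hUsub'
    rw [Nat.card_Icc] at this
    omega
  constructor
  · -- initial segments
    intro u hu1 hu2
    have hnT : n ∈ (Finset.Icc (u+1) n).filter (fun k => k ∉ U) :=
      Finset.mem_filter.mpr ⟨Finset.mem_Icc.mpr ⟨by omega, le_refl n⟩, hnU⟩
    set b := ((Finset.Icc (u+1) n).filter (fun k => k ∉ U)).min' ⟨n, hnT⟩ with hbdef
    have hbT : b ∈ (Finset.Icc (u+1) n).filter (fun k => k ∉ U) := Finset.min'_mem _ _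
    have hbU : b ∉ U := (Finset.mem_filter.mp hbT).2
    have hbge : u + 1 ≤ b := (Finset.mem_Icc.mp (Finset.mem_filter.mp hbT).1).1
    have hble : b ≤ n := (Finset.mem_Icc.mp (Finset.mem_filter.mp hbT).1).2
    have hbmin : ∀ k, k ∉ U → u < k → k ≤ n → b ≤ k := fun k h1 h2 h3 =>
      Finset.min'_le ((Finset.Icc (u+1) n).filter (fun k => k ∉ U)) k
        (Finset.mem_filter.mpr ⟨Finset.mem_Icc.mpr ⟨by omega, h3⟩, h1⟩)
    have hposb : lblPos n U b = ((Finset.Icc 1 b).filter (fun k => k ∉ U)).card := by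
      simp [lblPos, hbU]
    have hposb_le : lblPos n U b + U.card ≤ n := by
      rw [hposb]
      have hsub : (Finset.Icc 1 b).filter (fun k => k ∉ U) ⊆
          (Finset.Icc 1 n).filter (fun k => k ∉ U) :=
        Finset.filter_subset_filter _ (Finset.Icc_subset_Icc_right hble)
      have := Finset.card_le_card hsub
      omega
    have hposb_ge : 1 ≤ lblPos n U b := by
      rw [hposb]
      exact Finset.card_pos.mpr ⟨b, Finset.mem_filter.mpr
        ⟨Finset.mem_Icc.mpr ⟨by omega, le_refl b⟩, hbU⟩⟩
    by_cases hS : ∃ k ∈ U, k ≤ u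
    · obtain ⟨k₀, hk₀U, hk₀u⟩ := hS
      have hk₀S : k₀ ∈ U.filter (fun k => k ≤ u) := Finset.mem_filter.mpr ⟨hk₀U, hk₀u⟩
      set a := (U.filter (fun k => k ≤ u)).max' ⟨k₀, hk₀S⟩ with hadef
      have haS : a ∈ U.filter (fun k => k ≤ u) := Finset.max'_mem _ _
      have haU : a ∈ U := (Finset.mem_filter.mp haS).1
      have hau : a ≤ u := (Finset.mem_filter.mp haS).2
      have hamax : ∀ k ∈ U, k ≤ u → k ≤ a := fun k h1 h2 =>
        Finset.le_max' (U.filter (fun k => k ≤ u)) k (Finset.mem_filter.mpr ⟨h1, h2⟩)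
      have hposa : lblPos n U a = (n + 1 - U.card) + (U.filter (fun m => a ≤ m)).card := by
        simp [lblPos, haU]
      have hfa_ge : 1 ≤ (U.filter (fun m => a ≤ m)).card :=
        Finset.card_pos.mpr ⟨a, Finset.mem_filter.mpr ⟨haU, le_refl a⟩⟩
      have hfa_le : (U.filter (fun m => a ≤ m)).card ≤ U.card :=
        Finset.card_le_card (Finset.filter_subset _ _)
      refine ⟨a, b, by omega, ⟨by simp; omega, by simp; omega, by simp; omega, ?_⟩, ?_⟩
      · intro hBE
        simp only [BndEdge] at hBE
        omega
      · have hK : KofD n U a b =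
            ((Finset.Ico 1 b).filter (fun i => i ∉ U)) ∪ (U.filter (fun i => i ≤ a)) := by
          simp [KofD, haU, hbU]
        rw [hK]
        ext k
        simp only [Finset.mem_union, Finset.mem_filter, Finset.mem_Ico, Finset.mem_Icc]
        constructor
        · rintro (⟨⟨hk1, hkb⟩, hkU⟩ | ⟨hkU, hka⟩)
          · refine ⟨hk1, ?_⟩
            by_contra hgt
            have := hbmin k hkU (by omega) (by omega)
            omega
          · exact ⟨by have := (hU k hkU).1; omega, by omega⟩
        · rintro ⟨hk1, hku⟩
          by_cases hkU : k ∈ U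
          · exact Or.inr ⟨hkU, hamax k hkU hku⟩
          · exact Or.inl ⟨⟨hk1, by omega⟩, hkU⟩
    · push_neg at hS
      have hpos0 : lblPos n U 0 = 0 := by
        simp [lblPos, h0U]
      have hposb_ge2 : 2 ≤ lblPos n U b := by
        rw [hposb]
        refine Finset.one_lt_card.mpr ⟨1, ?_, b, ?_, by omega⟩
        · exact Finset.mem_filter.mpr ⟨Finset.mem_Icc.mpr ⟨le_refl 1, by omega⟩, h1U⟩
        · exact Finset.mem_filter.mpr ⟨Finset.mem_Icc.mpr ⟨by omega, le_refl b⟩, hbU⟩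
      refine ⟨0, b, by omega, ⟨by simp, by simp; omega, by omega, ?_⟩, ?_⟩
      · intro hBE
        simp only [BndEdge] at hBE
        omega
      · have hK : KofD n U 0 b = (Finset.Ioo 0 b).filter (fun i => i ∉ U) := by
          simp [KofD, h0U, hbU]
        rw [hK]
        ext k
        simp only [Finset.mem_filter, Finset.mem_Ioo, Finset.mem_Icc]
        constructor
        · rintro ⟨⟨hk0, hkb⟩, hkU⟩
          refine ⟨by omega, ?_⟩
          by_contra hgt
          have := hbmin k hkU (by omega) (by omega)
          omega
        · rintro ⟨hk1, hku⟩
          have hkU : k ∉ U := fun h => by have := hS k h; omega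
          exact ⟨⟨by omega, by omega⟩, hkU⟩
  · -- final segments
    intro v hv
    have h1T : (1:ℕ) ∈ (Finset.Icc 1 (n-v-1)).filter (fun k => k ∉ U) :=
      Finset.mem_filter.mpr ⟨Finset.mem_Icc.mpr ⟨le_refl 1, by omega⟩, h1U⟩
    set a := ((Finset.Icc 1 (n-v-1)).filter (fun k => k ∉ U)).max' ⟨1, h1T⟩ with hadef
    have haT : a ∈ (Finset.Icc 1 (n-v-1)).filter (fun k => k ∉ U) := Finset.max'_mem _ _
    have haU : a ∉ U := (Finset.mem_filter.mp haT).2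
    have ha1 : 1 ≤ a := (Finset.mem_Icc.mp (Finset.mem_filter.mp haT).1).1
    have hale : a ≤ n - v - 1 := (Finset.mem_Icc.mp (Finset.mem_filter.mp haT).1).2
    have hamax : ∀ k, k ∉ U → 1 ≤ k → k ≤ n - v - 1 → k ≤ a := fun k h1 h2 h3 =>
      Finset.le_max' ((Finset.Icc 1 (n-v-1)).filter (fun k => k ∉ U)) k
        (Finset.mem_filter.mpr ⟨Finset.mem_Icc.mpr ⟨h2, h3⟩, h1⟩)
    have hposa : lblPos n U a = ((Finset.Icc 1 a).filter (fun k => k ∉ U)).card := by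
      simp [lblPos, haU]
    have hposa_ge : 1 ≤ lblPos n U a := by
      rw [hposa]
      exact Finset.card_pos.mpr ⟨a, Finset.mem_filter.mpr
        ⟨Finset.mem_Icc.mpr ⟨ha1, le_refl a⟩, haU⟩⟩
    have hposa_le : lblPos n U a + U.card + 1 ≤ n := by
      rw [hposa]
      have hss : (Finset.Icc 1 a).filter (fun k => k ∉ U) ⊂
          (Finset.Icc 1 n).filter (fun k => k ∉ U) := by
        refine (Finset.ssubset_iff_of_subset
          (Finset.filter_subset_filter _ (Finset.Icc_subset_Icc_right (by omega)))).mpr ?_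
        refine ⟨n, Finset.mem_filter.mpr ⟨Finset.mem_Icc.mpr ⟨by omega, le_refl n⟩, hnU⟩, ?_⟩
        intro hmem
        have := (Finset.mem_Icc.mp (Finset.mem_filter.mp hmem).1).2
        omega
      have := Finset.card_lt_card hss
      omega
    by_cases hS : ∃ k ∈ U, n - v ≤ k
    · obtain ⟨k₀, hk₀U, hk₀⟩ := hS
      have hk₀S : k₀ ∈ U.filter (fun k => n - v ≤ k) := Finset.mem_filter.mpr ⟨hk₀U, hk₀⟩
      set b := (U.filter (fun k => n - v ≤ k)).min' ⟨k₀, hk₀S⟩ with hbdef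
      have hbS : b ∈ U.filter (fun k => n - v ≤ k) := Finset.min'_mem _ _
      have hbU : b ∈ U := (Finset.mem_filter.mp hbS).1
      have hbge : n - v ≤ b := (Finset.mem_filter.mp hbS).2
      have hblt : b < n := (hU b hbU).2
      have hbmin : ∀ k ∈ U, n - v ≤ k → b ≤ k := fun k h1 h2 =>
        Finset.min'_le (U.filter (fun k => n - v ≤ k)) k (Finset.mem_filter.mpr ⟨h1, h2⟩)
      have hposb : lblPos n U b = (n + 1 - U.card) + (U.filter (fun m => b ≤ m)).card := by
        simp [lblPos, hbU]
      have hfb_ge : 1 ≤ (U.filter (fun m => b ≤ m)).card :=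
        Finset.card_pos.mpr ⟨b, Finset.mem_filter.mpr ⟨hbU, le_refl b⟩⟩
      have hfb_le : (U.filter (fun m => b ≤ m)).card ≤ U.card :=
        Finset.card_le_card (Finset.filter_subset _ _)
      refine ⟨a, b, by omega, ⟨by simp; omega, by simp; omega, by simp; omega, ?_⟩, ?_⟩
      · intro hBE
        simp only [BndEdge] at hBE
        omega
      · have hK : KofD n U a b =
            ((Finset.Ioc a n).filter (fun i => i ∉ U)) ∪ (U.filter (fun i => b ≤ i)) := by
          simp [KofD, haU, hbU]
        rw [hK]
        ext k
        simp only [Finset.mem_union, Finset.mem_filter, Finset.mem_Ioc, Finset.mem_Icc]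
        constructor
        · rintro (⟨⟨hka, hkn⟩, hkU⟩ | ⟨hkU, hkb⟩)
          · refine ⟨?_, hkn⟩
            by_contra hlt
            have := hamax k hkU (by omega) (by omega)
            omega
          · exact ⟨by omega, by have := (hU k hkU).2; omega⟩
        · rintro ⟨hk1, hkn⟩
          by_cases hkU : k ∈ U
          · exact Or.inr ⟨hkU, hbmin k hkU hk1⟩
          · exact Or.inl ⟨⟨by omega, hkn⟩, hkU⟩
    · push_neg at hS
      have hposn1 : lblPos n U (n+1) + U.card = n + 1 := by
        have hK : lblPos n U (n+1) = ((Finset.Icc 1 (n+1)).filter (fun k => k ∉ U)).card := by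
          simp [lblPos, hn1U]
        have hsub : U ⊆ Finset.Icc 1 (n+1) := fun k hk => by
          have := hU k hk; rw [Finset.mem_Icc]; omega
        have heq : (Finset.Icc 1 (n+1)).filter (fun k => k ∉ U) = Finset.Icc 1 (n+1) \ U := by
          ext k; simp [Finset.mem_sdiff, Finset.mem_filter]
        rw [hK, heq, Finset.card_sdiff_of_subset hsub, Nat.card_Icc]
        have := Finset.card_le_card hsub
        rw [Nat.card_Icc] at this
        omega
      refine ⟨a, n+1, by omega, ⟨by simp; omega, by simp, by omega, ?_⟩, ?_⟩
      · intro hBE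
        simp only [BndEdge] at hBE
        omega
      · have hK : KofD n U a (n+1) = (Finset.Ioo a (n+1)).filter (fun i => i ∉ U) := by
          simp [KofD, haU, hn1U]
        rw [hK]
        ext k
        simp only [Finset.mem_filter, Finset.mem_Ioo, Finset.mem_Icc]
        constructor
        · rintro ⟨⟨hka, hkn⟩, hkU⟩
          refine ⟨?_, by omega⟩
          by_contra hlt
          have := hamax k hkU (by omega) (by omega)
          omega
        · rintro ⟨hk1, hkn⟩
          have hkU : k ∉ U := fun h => by have := hS k h; omega
          exact ⟨⟨by omega, by omega⟩, hkU⟩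
end

section
/- Fix an orientation 𝒜 of A_{n-1}. There exists a triangulation T of the labelled (n+2)-gon such that M_𝒜(T) = (1, 2, ..., n), and a triangulation T' such that M_𝒜(T') = (n, n−1, ..., 1). -/
open Finset

attribute [local instance] Classical.propDecidable

/-- number of up elements `≤ k`. -/
noncomputable def sUf (U : Finset ℕ) (k : ℕ) : ℕ := (U.filter (fun m => m ≤ k)).card

section Counts
variable {n : ℕ} {U : Finset ℕ}

lemma filter_split (U : Finset ℕ) (s : Finset ℕ) :
    (s.filter (fun m => m ∈ U)).card + (s.filter (fun m => m ∉ U)).card = s.card := by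
  have h := Finset.card_filter_add_card_filter_not (s := s) (p := fun m => m ∈ U)
  convert h using 3

lemma sUf_mono {a b : ℕ} (h : a ≤ b) : sUf U a ≤ sUf U b :=
  Finset.card_le_card (Finset.monotone_filter_right _ (fun x _ hx => hx.trans h))

lemma sUf_lt {a b : ℕ} (h : a < b) (hb : b ∈ U) : sUf U a < sUf U b := by
  have hsub : U.filter (fun m => m ≤ a) ⊆ (U.filter (fun m => m ≤ b)).erase b := by
    intro x hx
    simp only [Finset.mem_filter, Finset.mem_erase] at hx ⊢
    exact ⟨by omega, hx.1, by omega⟩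
  have hbmem : b ∈ U.filter (fun m => m ≤ b) := by simp [hb]
  calc sUf U a ≤ ((U.filter (fun m => m ≤ b)).erase b).card := Finset.card_le_card hsub
    _ < (U.filter (fun m => m ≤ b)).card := Finset.card_erase_lt_of_mem hbmem

lemma sUf_pred {b : ℕ} (hb : b ∉ U) : sUf U b = sUf U (b - 1) := by
  unfold sUf
  congr 1
  apply Finset.filter_congr
  intro x hx
  constructor
  · intro h
    rcases Nat.lt_or_ge x b with h'|h'
    · omega
    · have hxb : x = b := by omega
      subst hxb
      exact absurd hx hb
  · omega

lemma sUf_succ_mem {b : ℕ} (hb : b ∈ U) (hb1 : 1 ≤ b) : sUf U b = sUf U (b - 1) + 1 := by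
  unfold sUf
  have : U.filter (fun m => m ≤ b) = insert b (U.filter (fun m => m ≤ b - 1)) := by
    ext x
    simp only [Finset.mem_filter, Finset.mem_insert]
    constructor
    · rintro ⟨hx, hxb⟩
      rcases eq_or_ne x b with rfl|hne
      · exact Or.inl rfl
      · exact Or.inr ⟨hx, by omega⟩
    · rintro (rfl|⟨hx, hxb⟩)
      · exact ⟨hb, le_refl _⟩
      · exact ⟨hx, by omega⟩
  rw [this, Finset.card_insert_of_notMem (by simp; omega)]

/-- the fundamental identity: downs in `[1,k]` plus ups `≤ k` equals `k`. -/
lemma tD_add_sUf (hU : ∀ k ∈ U, 1 < k ∧ k < n) (k : ℕ) :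
    ((Finset.Icc 1 k).filter (fun m => m ∉ U)).card + sUf U k = k := by
  have h1 : (Finset.Icc 1 k).filter (fun m => m ∈ U) = U.filter (fun m => m ≤ k) := by
    ext x
    simp only [Finset.mem_filter, Finset.mem_Icc]
    constructor
    · rintro ⟨⟨_, h2⟩, h3⟩; exact ⟨h3, h2⟩
    · rintro ⟨h3, h2⟩; exact ⟨⟨by have := (hU x h3).1; omega, h2⟩, h3⟩
  have h2 := filter_split U (Finset.Icc 1 k)
  rw [h1] at h2
  have h3 : (Finset.Icc 1 k).card = k := by rw [Nat.card_Icc]; omega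
  unfold sUf
  omega

lemma sUf_le (hU : ∀ k ∈ U, 1 < k ∧ k < n) (k : ℕ) : sUf U k ≤ k := by
  have := tD_add_sUf hU k; omega

lemma sUf_lt_self (hU : ∀ k ∈ U, 1 < k ∧ k < n) {k : ℕ} (hk : 1 ≤ k) : sUf U k < k := by
  have h1 : U.filter (fun m => m ≤ k) ⊆ Finset.Icc 2 k := by
    intro x hx
    simp only [Finset.mem_filter] at hx
    simp only [Finset.mem_Icc]
    exact ⟨(hU x hx.1).1, hx.2⟩
  have := Finset.card_le_card h1
  rw [Nat.card_Icc] at this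
  unfold sUf
  omega

lemma sUf_card (hU : ∀ k ∈ U, 1 < k ∧ k < n) {k : ℕ} (hk : n - 1 ≤ k) : sUf U k = U.card := by
  unfold sUf
  congr 1
  apply Finset.filter_true_of_mem
  intro x hx
  have := (hU x hx).2; omega

lemma sUf_sub_le {a b : ℕ} (hab : a ≤ b) : sUf U b + a ≤ sUf U a + b := by
  have h : U.filter (fun m => m ≤ b) ⊆ (U.filter (fun m => m ≤ a)) ∪ Finset.Ioc a b := by
    intro x hx
    simp only [Finset.mem_filter, Finset.mem_union, Finset.mem_Ioc] at hx ⊢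
    rcases le_or_gt x a with h'|h'
    · exact Or.inl ⟨hx.1, h'⟩
    · exact Or.inr ⟨h', hx.2⟩
  have := (Finset.card_le_card h).trans (Finset.card_union_le _ _)
  rw [Nat.card_Ioc] at this
  unfold sUf
  have := sUf_mono (U := U) hab
  unfold sUf at this
  omega

lemma card_U_le (hU : ∀ k ∈ U, 1 < k ∧ k < n) (hn : 2 ≤ n) : U.card + 2 ≤ n := by
  have h1 : U ⊆ Finset.Icc 2 (n-1) := by
    intro x hx
    simp only [Finset.mem_Icc]
    have := hU x hx; omega
  have := Finset.card_le_card h1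
  rw [Nat.card_Icc] at this
  omega

end Counts

section Translate
variable {n : ℕ} {U : Finset ℕ}


/-- `sH k + sUf k = card + 1` for `k ∈ U`. -/
lemma sH_mem (hU : ∀ k ∈ U, 1 < k ∧ k < n) {k : ℕ} (hk : k ∈ U) :
    (U.filter (fun m => k ≤ m)).card + sUf U k = U.card + 1 := by
  have hu : (U.filter (fun m => m ≤ k)) ∪ (U.filter (fun m => k ≤ m)) = U := by
    ext x
    simp only [Finset.mem_union, Finset.mem_filter]
    constructor
    · rintro (h|h) <;> exact h.1
    · intro h
      rcases le_total x k with h'|h'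
      · exact Or.inl ⟨h, h'⟩
      · exact Or.inr ⟨h, h'⟩
  have hi : (U.filter (fun m => m ≤ k)) ∩ (U.filter (fun m => k ≤ m)) = {k} := by
    ext x
    simp only [Finset.mem_inter, Finset.mem_filter, Finset.mem_singleton]
    constructor
    · rintro ⟨⟨_, h1⟩, _, h2⟩; omega
    · rintro rfl; exact ⟨⟨hk, le_refl _⟩, hk, le_refl _⟩
  have := Finset.card_union_add_card_inter (U.filter (fun m => m ≤ k)) (U.filter (fun m => k ≤ m))
  rw [hu, hi] at this
  simp only [Finset.card_singleton] at this
  unfold sUf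
  omega

/-- `sH k + sUf k = card` for `k ∉ U`. -/
lemma sH_not_mem {k : ℕ} (hk : k ∉ U) :
    (U.filter (fun m => k ≤ m)).card + sUf U k = U.card := by
  have hu : (U.filter (fun m => m ≤ k)) ∪ (U.filter (fun m => k ≤ m)) = U := by
    ext x
    simp only [Finset.mem_union, Finset.mem_filter]
    constructor
    · rintro (h|h) <;> exact h.1
    · intro h
      rcases le_total x k with h'|h'
      · exact Or.inl ⟨h, h'⟩
      · exact Or.inr ⟨h, h'⟩
  have hi : (U.filter (fun m => m ≤ k)) ∩ (U.filter (fun m => k ≤ m)) = ∅ := by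
    ext x
    simp only [Finset.mem_inter, Finset.mem_filter, Finset.mem_singleton]
    constructor
    · rintro ⟨⟨hx, h1⟩, _, h2⟩
      have hxk : x = k := by omega
      subst hxk
      exact absurd hx hk
    · rintro h; exact absurd h (Finset.notMem_empty x)
  have := Finset.card_union_add_card_inter (U.filter (fun m => m ≤ k)) (U.filter (fun m => k ≤ m))
  rw [hu, hi] at this
  simp only [Finset.card_empty] at this
  unfold sUf
  omega

lemma piLow_up {k : ℕ} (hk : k ∈ U) : piLow n U k = -(sUf U k : ℤ) := by
  simp [piLow, hk, sUf]

lemma piLow_down (hU : ∀ k ∈ U, 1 < k ∧ k < n) {k : ℕ} (hk : k ∉ U) :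
    piLow n U k = (k : ℤ) - sUf U k := by
  simp only [piLow, hk, if_false]
  have h1 := tD_add_sUf hU k
  omega

lemma piHigh_up (hU : ∀ k ∈ U, 1 < k ∧ k < n) {k : ℕ} (hk : k ∈ U) :
    piHigh n U k = (sUf U k : ℤ) - U.card - 1 := by
  simp only [piHigh, hk, if_true]
  have := sH_mem hU hk
  omega

lemma piHigh_down (hU : ∀ k ∈ U, 1 < k ∧ k < n) {k : ℕ} (hk : k ∉ U) (hk1 : 1 ≤ k)
    (hk2 : k ≤ n + 1) : piHigh n U k = (n : ℤ) + 1 - k - U.card + sUf U k := by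
  simp only [piHigh, hk, if_false]
  have h1 : (Finset.Icc k n).filter (fun m => m ∈ U) = U.filter (fun m => k ≤ m) := by
    ext x
    simp only [Finset.mem_filter, Finset.mem_Icc]
    constructor
    · rintro ⟨⟨h2, _⟩, h3⟩; exact ⟨h3, h2⟩
    · rintro ⟨h3, h2⟩; exact ⟨⟨h2, by have := (hU x h3).2; omega⟩, h3⟩
  have h2 := filter_split U (Finset.Icc k n)
  rw [h1] at h2
  have h3 : (Finset.Icc k n).card + k = n + 1 := by rw [Nat.card_Icc]; omega
  have h4 := sH_not_mem hk
  omega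

lemma lblPos_up (hU : ∀ k ∈ U, 1 < k ∧ k < n) (hn : 2 ≤ n) {k : ℕ} (hk : k ∈ U) :
    lblPos n U k + sUf U k = n + 2 := by
  simp only [lblPos, hk, if_true]
  have h1 := sH_mem hU hk
  have h2 := card_U_le hU hn
  omega

lemma lblPos_down (hU : ∀ k ∈ U, 1 < k ∧ k < n) {k : ℕ} (hk : k ∉ U) :
    lblPos n U k + sUf U k = k := by
  simp only [lblPos, hk, if_false]
  have h1 := tD_add_sUf hU k
  omega

lemma nmem_of_big (hU : ∀ k ∈ U, 1 < k ∧ k < n) {k : ℕ} (hk : n ≤ k) : k ∉ U :=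
  fun h => absurd (hU k h).2 (by omega)

lemma nmem_of_small (hU : ∀ k ∈ U, 1 < k ∧ k < n) {k : ℕ} (hk : k ≤ 1) : k ∉ U :=
  fun h => absurd (hU k h).1 (by omega)

lemma sUf_zero (hU : ∀ k ∈ U, 1 < k ∧ k < n) : sUf U 0 = 0 := by
  have := sUf_le hU 0; omega

end Translate

section Vals
variable {n : ℕ} {U : Finset ℕ}

/-- largest up element `≤ j`, defaulting to `0`. -/
noncomputable def valA (U : Finset ℕ) (j : ℕ) : ℕ :=
  if h : (U.filter (fun m => m ≤ j)).Nonempty then (U.filter (fun m => m ≤ j)).max' h else 0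

/-- smallest down element in `(j, n]` (assuming one exists, else junk). -/
noncomputable def valB (n : ℕ) (U : Finset ℕ) (j : ℕ) : ℕ :=
  if h : (((Finset.Icc (j+1) n)).filter (fun m => m ∉ U)).Nonempty then
    (((Finset.Icc (j+1) n)).filter (fun m => m ∉ U)).min' h else n

/-- largest down element in `[1, j]` (assuming `j ≥ 1`, else junk). -/
noncomputable def valA' (U : Finset ℕ) (j : ℕ) : ℕ :=
  if h : (((Finset.Icc 1 j)).filter (fun m => m ∉ U)).Nonempty then
    (((Finset.Icc 1 j)).filter (fun m => m ∉ U)).max' h else 1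

/-- smallest up element `> j`, defaulting to `n+1`. -/
noncomputable def valB' (n : ℕ) (U : Finset ℕ) (j : ℕ) : ℕ :=
  if h : (U.filter (fun m => j < m)).Nonempty then (U.filter (fun m => j < m)).min' h
  else n + 1

lemma valA_cases (U : Finset ℕ) (j : ℕ) :
    (valA U j = 0 ∧ sUf U j = 0) ∨
    (valA U j ∈ U ∧ valA U j ≤ j ∧ sUf U (valA U j) = sUf U j ∧ 1 ≤ sUf U j) := by
  unfold valA
  split_ifs with h
  · right
    have hmem := (U.filter (fun m => m ≤ j)).max'_mem h
    simp only [Finset.mem_filter] at hmem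
    refine ⟨hmem.1, hmem.2, ?_, ?_⟩
    · unfold sUf
      congr 1
      apply Finset.filter_congr
      intro x hx
      constructor
      · intro h'; exact h'.trans hmem.2
      · intro h'
        exact Finset.le_max' _ x (by simp only [Finset.mem_filter]; exact ⟨hx, h'⟩)
    · unfold sUf
      exact Finset.card_pos.mpr h
  · left
    refine ⟨rfl, ?_⟩
    unfold sUf
    rw [Finset.not_nonempty_iff_eq_empty] at h
    simp [h]

lemma valB_spec (hU : ∀ k ∈ U, 1 < k ∧ k < n) {j : ℕ} (h1 : 1 ≤ j) (h2 : j ≤ n - 1)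
    (hn : 2 ≤ n) :
    valB n U j ∉ U ∧ j < valB n U j ∧ valB n U j ≤ n ∧
      sUf U (valB n U j) + j + 1 = sUf U j + valB n U j := by
  have hne : (((Finset.Icc (j+1) n)).filter (fun m => m ∉ U)).Nonempty := by
    refine ⟨n, ?_⟩
    simp only [Finset.mem_filter, Finset.mem_Icc]
    exact ⟨⟨by omega, le_refl n⟩, nmem_of_big hU (le_refl n)⟩
  unfold valB
  rw [dif_pos hne]
  set b := (((Finset.Icc (j+1) n)).filter (fun m => m ∉ U)).min' hne with hb
  have hbmem := (((Finset.Icc (j+1) n)).filter (fun m => m ∉ U)).min'_mem hne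
  rw [← hb] at hbmem
  simp only [Finset.mem_filter, Finset.mem_Icc] at hbmem
  obtain ⟨⟨hb1, hb2⟩, hb3⟩ := hbmem
  refine ⟨hb3, by omega, hb2, ?_⟩
  -- every m with j < m < b is in U
  have hmid : ∀ m, j < m → m < b → m ∈ U := by
    intro m hm1 hm2
    by_contra hm
    have : b ≤ m := Finset.min'_le _ m (by
      simp only [Finset.mem_filter, Finset.mem_Icc]
      exact ⟨⟨by omega, by omega⟩, hm⟩)
    omega
  -- sUf (b-1) = sUf j + (b-1-j)
  have hsplit : U.filter (fun m => m ≤ b - 1) =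
      (U.filter (fun m => m ≤ j)) ∪ Finset.Ioc j (b - 1) := by
    ext x
    simp only [Finset.mem_filter, Finset.mem_union, Finset.mem_Ioc]
    constructor
    · rintro ⟨hx, hxb⟩
      rcases le_or_gt x j with h'|h'
      · exact Or.inl ⟨hx, h'⟩
      · exact Or.inr ⟨h', hxb⟩
    · rintro (⟨hx, hxj⟩|⟨hxj, hxb⟩)
      · exact ⟨hx, by omega⟩
      · exact ⟨hmid x hxj (by omega), hxb⟩
  have hdisj : Disjoint (U.filter (fun m => m ≤ j)) (Finset.Ioc j (b - 1)) := by
    rw [Finset.disjoint_left]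
    intro x hx hx'
    simp only [Finset.mem_filter] at hx
    simp only [Finset.mem_Ioc] at hx'
    omega
  have hcard : sUf U (b - 1) = sUf U j + (b - 1 - j) := by
    unfold sUf
    rw [hsplit, Finset.card_union_of_disjoint hdisj, Nat.card_Ioc]
  have hpred := sUf_pred hb3
  omega

lemma valA'_spec (hU : ∀ k ∈ U, 1 < k ∧ k < n) {j : ℕ} (h1 : 1 ≤ j) :
    valA' U j ∉ U ∧ 1 ≤ valA' U j ∧ valA' U j ≤ j ∧
      sUf U j + valA' U j = sUf U (valA' U j) + j := by
  have hne : (((Finset.Icc 1 j)).filter (fun m => m ∉ U)).Nonempty := by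
    refine ⟨1, ?_⟩
    simp only [Finset.mem_filter, Finset.mem_Icc]
    exact ⟨⟨le_refl 1, h1⟩, nmem_of_small hU (le_refl 1)⟩
  unfold valA'
  rw [dif_pos hne]
  set a := (((Finset.Icc 1 j)).filter (fun m => m ∉ U)).max' hne with ha
  have hamem := (((Finset.Icc 1 j)).filter (fun m => m ∉ U)).max'_mem hne
  rw [← ha] at hamem
  simp only [Finset.mem_filter, Finset.mem_Icc] at hamem
  obtain ⟨⟨ha1, ha2⟩, ha3⟩ := hamem
  refine ⟨ha3, ha1, ha2, ?_⟩
  have hmid : ∀ m, a < m → m ≤ j → m ∈ U := by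
    intro m hm1 hm2
    by_contra hm
    have : m ≤ a := Finset.le_max' _ m (by
      simp only [Finset.mem_filter, Finset.mem_Icc]
      exact ⟨⟨by omega, hm2⟩, hm⟩)
    omega
  have hsplit : U.filter (fun m => m ≤ j) =
      (U.filter (fun m => m ≤ a)) ∪ Finset.Ioc a j := by
    ext x
    simp only [Finset.mem_filter, Finset.mem_union, Finset.mem_Ioc]
    constructor
    · rintro ⟨hx, hxj⟩
      rcases le_or_gt x a with h'|h'
      · exact Or.inl ⟨hx, h'⟩
      · exact Or.inr ⟨h', hxj⟩
    · rintro (⟨hx, hxa⟩|⟨hxa, hxj⟩)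
      · exact ⟨hx, by omega⟩
      · exact ⟨hmid x hxa hxj, hxj⟩
  have hdisj : Disjoint (U.filter (fun m => m ≤ a)) (Finset.Ioc a j) := by
    rw [Finset.disjoint_left]
    intro x hx hx'
    simp only [Finset.mem_filter] at hx
    simp only [Finset.mem_Ioc] at hx'
    omega
  have hcard : sUf U j = sUf U a + (j - a) := by
    unfold sUf
    rw [hsplit, Finset.card_union_of_disjoint hdisj, Nat.card_Ioc]
  omega

lemma valB'_cases (hU : ∀ k ∈ U, 1 < k ∧ k < n) (j : ℕ) :
    (valB' n U j = n + 1 ∧ sUf U j = U.card) ∨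
    (valB' n U j ∈ U ∧ j < valB' n U j ∧ sUf U (valB' n U j) = sUf U j + 1) := by
  unfold valB'
  split_ifs with h
  · right
    have hmem := (U.filter (fun m => j < m)).min'_mem h
    simp only [Finset.mem_filter] at hmem
    refine ⟨hmem.1, hmem.2, ?_⟩
    set b := (U.filter (fun m => j < m)).min' h with hb
    have hsplit : U.filter (fun m => m ≤ b) = insert b (U.filter (fun m => m ≤ j)) := by
      ext x
      simp only [Finset.mem_filter, Finset.mem_insert]
      constructor
      · rintro ⟨hx, hxb⟩
        rcases le_or_gt x j with h'|h'
        · exact Or.inr ⟨hx, h'⟩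
        · left
          have : b ≤ x := Finset.min'_le _ x (by
            simp only [Finset.mem_filter]; exact ⟨hx, h'⟩)
          omega
      · rintro (rfl|⟨hx, hxj⟩)
        · exact ⟨hmem.1, le_refl _⟩
        · exact ⟨hx, by have := hmem.2; omega⟩
    have hnotin : b ∉ U.filter (fun m => m ≤ j) := by
      simp only [Finset.mem_filter]
      rintro ⟨_, h'⟩
      have := hmem.2; omega
    unfold sUf
    rw [hsplit, Finset.card_insert_of_notMem hnotin]
  · left
    rw [Finset.not_nonempty_iff_eq_empty, Finset.filter_eq_empty_iff] at h
    refine ⟨rfl, ?_⟩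
    unfold sUf
    congr 1
    apply Finset.filter_true_of_mem
    intro x hx
    have := h hx
    omega

lemma valA_self {i : ℕ} (hi : i ∈ U) : valA U i = i := by
  unfold valA
  have hne : (U.filter (fun m => m ≤ i)).Nonempty := ⟨i, by simp [hi]⟩
  rw [dif_pos hne]
  apply le_antisymm
  · have := (U.filter (fun m => m ≤ i)).max'_mem hne
    simp only [Finset.mem_filter] at this
    exact this.2
  · exact Finset.le_max' _ i (by simp [hi])

lemma valA'_self (hU : ∀ k ∈ U, 1 < k ∧ k < n) {i : ℕ} (hi : i ∉ U) (h1 : 1 ≤ i) :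
    valA' U i = i := by
  have h := valA'_spec hU (U := U) (j := i) h1
  unfold valA' at h ⊢
  have hne : (((Finset.Icc 1 i)).filter (fun m => m ∉ U)).Nonempty :=
    ⟨i, by simp only [Finset.mem_filter, Finset.mem_Icc]; exact ⟨⟨h1, le_refl _⟩, hi⟩⟩
  rw [dif_pos hne] at h ⊢
  apply le_antisymm
  · exact h.2.2.1
  · exact Finset.le_max' _ i (by
      simp only [Finset.mem_filter, Finset.mem_Icc]; exact ⟨⟨h1, le_refl _⟩, hi⟩)

lemma valB_self (hU : ∀ k ∈ U, 1 < k ∧ k < n) {i : ℕ} (hi : i ∉ U) (h1 : 1 ≤ i)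
    (h2 : i ≤ n) : valB n U (i - 1) = i := by
  unfold valB
  have hne : (((Finset.Icc (i-1+1) n)).filter (fun m => m ∉ U)).Nonempty :=
    ⟨i, by simp only [Finset.mem_filter, Finset.mem_Icc]; exact ⟨⟨by omega, h2⟩, hi⟩⟩
  rw [dif_pos hne]
  apply le_antisymm
  · exact Finset.min'_le _ i (by
      simp only [Finset.mem_filter, Finset.mem_Icc]; exact ⟨⟨by omega, h2⟩, hi⟩)
  · have := (((Finset.Icc (i-1+1) n)).filter (fun m => m ∉ U)).min'_mem hne
    simp only [Finset.mem_filter, Finset.mem_Icc] at this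
    omega

lemma valB'_self {i : ℕ} (hi : i ∈ U) (h1 : 1 ≤ i) : valB' n U (i - 1) = i := by
  unfold valB'
  have hne : (U.filter (fun m => i - 1 < m)).Nonempty := by
    refine ⟨i, ?_⟩
    simp only [Finset.mem_filter]
    exact ⟨hi, by omega⟩
  rw [dif_pos hne]
  apply le_antisymm
  · exact Finset.min'_le _ i (by simp only [Finset.mem_filter]; exact ⟨hi, by omega⟩)
  · have := (U.filter (fun m => i - 1 < m)).min'_mem hne
    simp only [Finset.mem_filter] at this
    omega

end Vals

section MuBounds
variable {n : ℕ} {U : Finset ℕ}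

lemma sUf_le_card (U : Finset ℕ) (k : ℕ) : sUf U k ≤ U.card :=
  Finset.card_le_card (Finset.filter_subset _ _)

lemma bnd_symm {a b : ℕ} (h : BndEdge n U a b) : BndEdge n U b a := by
  unfold BndEdge at h ⊢; tauto

/-- `μ_i(a) ≤ i` for all `a < i`. -/
lemma mu_le_low (hU : ∀ k ∈ U, 1 < k ∧ k < n) {i a : ℕ} (hi1 : 1 ≤ i) (hai : a < i) :
    muD n U i a ≤ i := by
  simp only [muD, if_pos hai]
  have h1 := sUf_mono (U := U) (le_of_lt hai)
  have h2 := sUf_le hU a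
  have h3 := sUf_lt_self hU hi1
  have h4 := sUf_sub_le (U := U) (le_of_lt hai)
  by_cases hiU : i ∈ U <;> by_cases haU : a ∈ U
  · rw [piLow_up hiU, piLow_up haU]; omega
  · rw [piLow_up hiU, piLow_down hU haU]; omega
  · rw [piLow_down hU hiU, piLow_up haU]; omega
  · rw [piLow_down hU hiU, piLow_down hU haU]; omega

/-- `μ_i(b) ≤ n + 1 - i` for all `i < b ≤ n + 1`. -/
lemma mu_le_high (hU : ∀ k ∈ U, 1 < k ∧ k < n) (hn : 2 ≤ n) {i b : ℕ} (hi1 : 1 ≤ i)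
    (hi2 : i ≤ n) (hib : i < b) (hb : b ≤ n + 1) : muD n U i b ≤ n + 1 - i := by
  simp only [muD, if_neg (by omega : ¬ b < i)]
  have h1 := sUf_mono (U := U) (le_of_lt hib)
  have h2 := sUf_le_card U i
  have h3 := sUf_le_card U b
  have h4 := sUf_sub_le (U := U) (le_of_lt hib)
  have h5 := card_U_le hU hn
  have h6 := sUf_card hU (k := n + 1) (by omega)
  have h7 := sUf_sub_le (U := U) (show i ≤ n + 1 by omega)
  by_cases hiU : i ∈ U <;> by_cases hbU : b ∈ U
  · have h8 := (hU b hbU)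
    have h9 := sUf_lt hib hbU
    rw [piHigh_up hU hiU, piHigh_up hU hbU]; omega
  · have h8 := sUf_pred (U := U) hbU
    have h9 := sUf_sub_le (U := U) (show i ≤ b - 1 by omega)
    rw [piHigh_up hU hiU, piHigh_down hU hbU (by omega) hb]; omega
  · have h8 := (hU b hbU)
    have h9 := sUf_lt hib hbU
    rw [piHigh_down hU hiU (by omega) (by omega), piHigh_up hU hbU]; omega
  · have h8 := sUf_pred (U := U) hbU
    have h9 := sUf_sub_le (U := U) (show i ≤ b - 1 by omega)
    rw [piHigh_down hU hiU (by omega) (by omega), piHigh_down hU hbU (by omega) hb]; omega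

/-- a boundary edge at `i` has `μ`-value at most 1. -/
lemma mu_bnd (hU : ∀ k ∈ U, 1 < k ∧ k < n) (hn : 2 ≤ n) {i x : ℕ} (hi1 : 1 ≤ i)
    (hi2 : i ≤ n) (hx : x ≤ n + 1) (hix : i ≠ x) (h : BndEdge n U i x) :
    muD n U i x ≤ 1 := by
  unfold BndEdge at h
  have hq := card_U_le hU hn
  have hcard := sUf_card hU (k := n + 1) (by omega)
  have hcn := sUf_card hU (k := n) (by omega)
  have h2 := sUf_le_card U i
  have h3 := sUf_le_card U x
  have h3' := sUf_le hU x
  have h4 := sUf_lt_self hU hi1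
  have h5 := sUf_sub_le (U := U) (show i ≤ n by omega)
  have h6 := sUf_sub_le (U := U) (show x ≤ n + 1 by omega)
  rcases lt_or_ge x i with hxi|hxi
  · -- x < i : piLow branch
    simp only [muD, if_pos hxi]
    have h7 := sUf_mono (U := U) (le_of_lt hxi)
    have h6' := sUf_sub_le (U := U) (show x ≤ n by omega)
    by_cases hiU : i ∈ U <;> by_cases hxU : x ∈ U
    · have h8 := sUf_lt hxi hiU
      have hpi := lblPos_up hU hn hiU
      have hpx := lblPos_up hU hn hxU
      rw [piLow_up hiU, piLow_up hxU]; omega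
    · have hpi := lblPos_up hU hn hiU
      have hpx := lblPos_down hU hxU
      rw [piLow_up hiU, piLow_down hU hxU]; omega
    · have h8 := sUf_lt (show (0:ℕ) < x from by have := (hU x hxU).1; omega) hxU
      have h9 := sUf_zero hU
      have hpi := lblPos_down hU hiU
      have hpx := lblPos_up hU hn hxU
      rw [piLow_down hU hiU, piLow_up hxU]; omega
    · have h8 := sUf_pred (U := U) hiU
      have h9 := sUf_sub_le (U := U) (show x ≤ i - 1 by omega)
      have hpi := lblPos_down hU hiU
      have hpx := lblPos_down hU hxU
      rw [piLow_down hU hiU, piLow_down hU hxU]; omega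
  · -- x > i : piHigh branch
    have hxi' : i < x := by omega
    simp only [muD, if_neg (by omega : ¬ x < i)]
    have h7 := sUf_mono (U := U) (le_of_lt hxi')
    by_cases hiU : i ∈ U <;> by_cases hxU : x ∈ U
    · have h8 := sUf_lt hxi' hxU
      have hpi := lblPos_up hU hn hiU
      have hpx := lblPos_up hU hn hxU
      rw [piHigh_up hU hiU, piHigh_up hU hxU]; omega
    · have h8 := sUf_lt_self hU (show 1 ≤ x by omega)
      have hpi := lblPos_up hU hn hiU
      have hpx := lblPos_down hU hxU
      rw [piHigh_up hU hiU, piHigh_down hU hxU (by omega) hx]; omega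
    · have h8 := sUf_lt hxi' hxU
      have hpi := lblPos_down hU hiU
      have hpx := lblPos_up hU hn hxU
      rw [piHigh_down hU hiU (by omega) (by omega), piHigh_up hU hxU]; omega
    · have h8 := sUf_pred (U := U) hxU
      have h9 := sUf_sub_le (U := U) (show i ≤ x - 1 by omega)
      have hpi := lblPos_down hU hiU
      have hpx := lblPos_down hU hxU
      rw [piHigh_down hU hiU (by omega) (by omega), piHigh_down hU hxU (by omega) hx]; omega

end MuBounds

/-- the triangulation realizing `(1, …, n)`. -/
noncomputable def TrT (n : ℕ) (U : Finset ℕ) : Finset (ℕ × ℕ) :=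
  (Finset.Icc 1 (n-1)).image (fun j => (valA U j, valB n U j))

/-- the triangulation realizing `(n, …, 1)`. -/
noncomputable def TrT' (n : ℕ) (U : Finset ℕ) : Finset (ℕ × ℕ) :=
  (Finset.Icc 1 (n-1)).image (fun j => (valA' U j, valB' n U j))

section Triang
variable {n : ℕ} {U : Finset ℕ}

lemma lblPos_zero (hU : ∀ k ∈ U, 1 < k ∧ k < n) : lblPos n U 0 = 0 := by
  have h1 := lblPos_down hU (nmem_of_small hU (show (0:ℕ) ≤ 1 by omega))
  have h2 := sUf_zero hU
  omega

lemma posA_cases (hU : ∀ k ∈ U, 1 < k ∧ k < n) (hn : 2 ≤ n) (j : ℕ) :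
    (valA U j = 0 ∧ sUf U j = 0 ∧ lblPos n U (valA U j) = 0) ∨
    (valA U j ∈ U ∧ valA U j ≤ j ∧ 1 ≤ sUf U j ∧
      lblPos n U (valA U j) + sUf U j = n + 2) := by
  rcases valA_cases U j with ⟨h1, h2⟩|⟨h1, h2, h3, h4⟩
  · left
    exact ⟨h1, h2, by rw [h1]; exact lblPos_zero hU⟩
  · right
    have := lblPos_up hU hn h1
    exact ⟨h1, h2, h4, by omega⟩

lemma posB_eq (hU : ∀ k ∈ U, 1 < k ∧ k < n) (hn : 2 ≤ n) {j : ℕ} (h1 : 1 ≤ j)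
    (h2 : j ≤ n - 1) : lblPos n U (valB n U j) + sUf U j = j + 1 := by
  obtain ⟨hb1, hb2, hb3, hb4⟩ := valB_spec hU h1 h2 hn
  have h5 := lblPos_down hU hb1
  omega

lemma posA'_eq (hU : ∀ k ∈ U, 1 < k ∧ k < n) {j : ℕ} (h1 : 1 ≤ j) :
    lblPos n U (valA' U j) + sUf U j = j := by
  obtain ⟨ha1, ha2, ha3, ha4⟩ := valA'_spec hU h1
  have h5 := lblPos_down hU ha1
  omega

lemma posB'_eq (hU : ∀ k ∈ U, 1 < k ∧ k < n) (hn : 2 ≤ n) (j : ℕ) :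
    lblPos n U (valB' n U j) + sUf U j = n + 1 := by
  rcases valB'_cases hU (n := n) j with ⟨hb1, hb2⟩|⟨hb1, hb2, hb3⟩
  · have h5 := lblPos_down hU (nmem_of_big hU (show n ≤ n + 1 by omega))
    have h6 := sUf_card hU (k := n + 1) (by omega)
    rw [hb1]; omega
  · have h5 := lblPos_up hU hn hb1
    omega

lemma isTriang_TrT (hU : ∀ k ∈ U, 1 < k ∧ k < n) (hn : 2 ≤ n) : IsTriang n U (TrT n U) := by
  have hq := card_U_le hU hn
  refine ⟨?_, ?_, ?_⟩
  · rintro ⟨a, b⟩ he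
    simp only [TrT, Finset.mem_image, Finset.mem_Icc, Prod.mk.injEq] at he
    obtain ⟨j, ⟨hj1, hj2⟩, rfl, rfl⟩ := he
    obtain ⟨hb1, hb2, hb3, hb4⟩ := valB_spec hU hj1 hj2 hn
    have hpb := posB_eq hU hn hj1 hj2
    have hsj := sUf_lt_self hU hj1
    have hsjc := sUf_le_card U j
    constructor
    · rcases valA_cases U j with ⟨h1, _⟩|⟨_, h1, _, _⟩ <;> omega
    · refine ⟨by simp; rcases valA_cases U j with ⟨h1, _⟩|⟨_, h1, _, _⟩ <;> omega,
        by simp; omega, by simp; rcases valA_cases U j with ⟨h1, _⟩|⟨_, h1, _, _⟩ <;> omega, ?_⟩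
      rcases posA_cases hU hn j with ⟨h1, h2, h3⟩|⟨h1, h2, h3, h4⟩ <;>
        · unfold BndEdge
          simp only []
          omega
  · rintro ⟨a, b⟩ he ⟨c, d⟩ hf
    simp only [TrT, Finset.mem_image, Finset.mem_Icc, Prod.mk.injEq] at he hf
    obtain ⟨j, ⟨hj1, hj2⟩, rfl, rfl⟩ := he
    obtain ⟨j', ⟨hj1', hj2'⟩, rfl, rfl⟩ := hf
    have hpb := posB_eq hU hn hj1 hj2
    have hpb' := posB_eq hU hn hj1' hj2'
    have hsj := sUf_lt_self hU hj1
    have hsj' := sUf_lt_self hU hj1'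
    have hsjc := sUf_le_card U j
    have hsjc' := sUf_le_card U j'
    have hmono : (j ≤ j' ∧ sUf U j ≤ sUf U j' ∧ sUf U j' + j ≤ sUf U j + j') ∨
        (j' ≤ j ∧ sUf U j' ≤ sUf U j ∧ sUf U j + j' ≤ sUf U j' + j) := by
      rcases le_total j j' with h|h
      · exact Or.inl ⟨h, sUf_mono h, sUf_sub_le h⟩
      · exact Or.inr ⟨h, sUf_mono h, sUf_sub_le h⟩
    rcases posA_cases hU hn j with ⟨h1, h2, h3⟩|⟨h1, h2, h3, h4⟩ <;>
      rcases posA_cases hU hn j' with ⟨h1', h2', h3'⟩|⟨h1', h2', h3', h4'⟩ <;>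
      · unfold DiagCross
        simp only []
        omega
  · rw [TrT, Finset.card_image_of_injOn, Nat.card_Icc]
    · omega
    · intro j hj j' hj' heq
      simp only [Finset.mem_coe, Finset.mem_Icc] at hj hj'
      simp only [Prod.mk.injEq] at heq
      obtain ⟨hA, hB⟩ := heq
      have hpb := posB_eq hU hn hj.1 hj.2
      have hpb' := posB_eq hU hn hj'.1 hj'.2
      rw [hB] at hpb
      rcases posA_cases hU hn j with ⟨h1, h2, h3⟩|⟨h1, h2, h3, h4⟩ <;>
        rcases posA_cases hU hn j' with ⟨h1', h2', h3'⟩|⟨h1', h2', h3', h4'⟩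
      · omega
      · rw [← hA, h1] at h1'
        exact absurd h1' (nmem_of_small hU (by omega))
      · rw [hA, h1'] at h1
        exact absurd h1 (nmem_of_small hU (by omega))
      · rw [hA] at h4
        omega
  
lemma isTriang_TrT' (hU : ∀ k ∈ U, 1 < k ∧ k < n) (hn : 2 ≤ n) : IsTriang n U (TrT' n U) := by
  have hq := card_U_le hU hn
  refine ⟨?_, ?_, ?_⟩
  · rintro ⟨a, b⟩ he
    simp only [TrT', Finset.mem_image, Finset.mem_Icc, Prod.mk.injEq] at he
    obtain ⟨j, ⟨hj1, hj2⟩, rfl, rfl⟩ := he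
    obtain ⟨ha1, ha2, ha3, ha4⟩ := valA'_spec hU hj1
    have hpa := posA'_eq hU hj1
    have hpb := posB'_eq hU hn j
    have hsj := sUf_lt_self hU hj1
    have hsjc := sUf_le_card U j
    have hblt : j < valB' n U j := by
      rcases valB'_cases hU (n := n) j with ⟨h1, _⟩|⟨_, h1, _⟩ <;> omega
    have hble : valB' n U j ≤ n + 1 := by
      rcases valB'_cases hU (n := n) j with ⟨h1, _⟩|⟨h1, _, _⟩
      · omega
      · have := (hU _ h1).2; omega
    constructor
    · omega
    · exact ⟨by simp; omega, by simp; omega, by simp; omega, by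
        unfold BndEdge; simp only []; omega⟩
  · rintro ⟨a, b⟩ he ⟨c, d⟩ hf
    simp only [TrT', Finset.mem_image, Finset.mem_Icc, Prod.mk.injEq] at he hf
    obtain ⟨j, ⟨hj1, hj2⟩, rfl, rfl⟩ := he
    obtain ⟨j', ⟨hj1', hj2'⟩, rfl, rfl⟩ := hf
    have hpa := posA'_eq hU hj1
    have hpa' := posA'_eq hU hj1'
    have hpb := posB'_eq hU hn j
    have hpb' := posB'_eq hU hn j'
    have hsj := sUf_lt_self hU hj1
    have hsj' := sUf_lt_self hU hj1'
    have hsjc := sUf_le_card U j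
    have hsjc' := sUf_le_card U j'
    have hmono : (j ≤ j' ∧ sUf U j ≤ sUf U j' ∧ sUf U j' + j ≤ sUf U j + j') ∨
        (j' ≤ j ∧ sUf U j' ≤ sUf U j ∧ sUf U j + j' ≤ sUf U j' + j) := by
      rcases le_total j j' with h|h
      · exact Or.inl ⟨h, sUf_mono h, sUf_sub_le h⟩
      · exact Or.inr ⟨h, sUf_mono h, sUf_sub_le h⟩
    unfold DiagCross
    simp only []
    omega
  · rw [TrT', Finset.card_image_of_injOn, Nat.card_Icc]
    · omega
    · intro j hj j' hj' heq
      simp only [Finset.mem_coe, Finset.mem_Icc] at hj hj'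
      simp only [Prod.mk.injEq] at heq
      obtain ⟨hA, hB⟩ := heq
      have hpa := posA'_eq hU hj.1
      have hpa' := posA'_eq hU hj'.1
      have hpb := posB'_eq hU hn j
      have hpb' := posB'_eq hU hn j'
      rw [hA] at hpa
      rw [hB] at hpb
      omega

end Triang

section Weights
variable {n : ℕ} {U : Finset ℕ}

lemma sup_eq {S : Finset ℕ} {f : ℕ → ℕ} {v : ℕ} (h1 : ∀ x ∈ S, f x ≤ v) {a : ℕ}
    (ha : a ∈ S) (hfa : f a = v) : S.sup f = v :=
  le_antisymm (Finset.sup_le h1) (hfa ▸ Finset.le_sup ha)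

lemma lblPos_one (hU : ∀ k ∈ U, 1 < k ∧ k < n) : lblPos n U 1 = 1 := by
  have h1 := lblPos_down hU (nmem_of_small hU (le_refl 1))
  have h2 := sUf_lt_self hU (le_refl 1)
  omega

lemma bnd_zero_one (hU : ∀ k ∈ U, 1 < k ∧ k < n) : BndEdge n U 0 1 := by
  unfold BndEdge
  have h1 := lblPos_zero hU
  have h2 := lblPos_one hU
  omega

lemma mu_one_zero (hU : ∀ k ∈ U, 1 < k ∧ k < n) : muD n U 1 0 = 1 := by
  simp only [muD, if_pos (by omega : (0:ℕ) < 1)]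
  rw [piLow_down hU (nmem_of_small hU (le_refl 1)),
    piLow_down hU (nmem_of_small hU (by omega : (0:ℕ) ≤ 1))]
  have h2 := sUf_lt_self hU (le_refl 1)
  have h3 := sUf_zero hU
  omega

lemma bnd_top (hU : ∀ k ∈ U, 1 < k ∧ k < n) (hn : 2 ≤ n) : BndEdge n U n (n+1) := by
  unfold BndEdge
  have h1 := lblPos_down hU (nmem_of_big hU (le_refl n))
  have h2 := lblPos_down hU (nmem_of_big hU (show n ≤ n+1 by omega))
  have h3 := sUf_card hU (k := n) (by omega)
  have h4 := sUf_card hU (k := n + 1) (by omega)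
  omega

lemma mu_top (hU : ∀ k ∈ U, 1 < k ∧ k < n) (hn : 2 ≤ n) : muD n U n (n+1) = 1 := by
  simp only [muD, if_neg (by omega : ¬ n + 1 < n)]
  rw [piHigh_down hU (nmem_of_big hU (le_refl n)) (by omega) (by omega),
    piHigh_down hU (nmem_of_big hU (show n ≤ n+1 by omega)) (by omega) (by omega)]
  have h3 := sUf_card hU (k := n) (by omega)
  have h4 := sUf_card hU (k := n + 1) (by omega)
  omega

lemma pl_TrT_down (hU : ∀ k ∈ U, 1 < k ∧ k < n) (hn : 2 ≤ n) {i : ℕ} (hi1 : 1 ≤ i)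
    (hi2 : i ≤ n) (hiU : i ∉ U) : pl n U (TrT n U) i = i := by
  unfold pl
  rcases eq_or_lt_of_le hi1 with h1|h1
  · -- i = 1 : witness 0
    subst h1
    apply sup_eq
    · intro x hx
      simp only [Finset.mem_filter, Finset.mem_range] at hx
      exact mu_le_low hU (le_refl 1) hx.1
    · show (0:ℕ) ∈ _
      simp only [Finset.mem_filter, Finset.mem_range]
      exact ⟨by omega, Or.inr (Or.inr (bnd_zero_one hU))⟩
    · exact mu_one_zero hU
  · -- i ≥ 2 : witness valA (i-1), via the diagonal (valA (i-1), i) ∈ TrT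
    have hmem : (valA U (i-1), i) ∈ TrT n U := by
      simp only [TrT, Finset.mem_image, Finset.mem_Icc, Prod.mk.injEq]
      exact ⟨i - 1, ⟨by omega, by omega⟩, rfl, valB_self hU hiU hi1 hi2⟩
    apply sup_eq
    · intro x hx
      simp only [Finset.mem_filter, Finset.mem_range] at hx
      exact mu_le_low hU hi1 hx.1
    · show valA U (i-1) ∈ _
      simp only [Finset.mem_filter, Finset.mem_range]
      refine ⟨?_, Or.inl hmem⟩
      rcases valA_cases U (i-1) with ⟨h2, _⟩|⟨_, h2, _, _⟩ <;> omega
    · have hpred := sUf_pred (U := U) hiU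
      have hi0 : ¬ (0:ℕ) ∈ U := nmem_of_small hU (by omega)
      rcases valA_cases U (i-1) with ⟨h2, h3⟩|⟨h2, h3, h4, h5⟩
      · rw [h2]
        simp only [muD, if_pos (by omega : 0 < i)]
        rw [piLow_down hU hiU, piLow_down hU hi0]
        have h6 := sUf_zero hU
        omega
      · simp only [muD, if_pos (by omega : valA U (i-1) < i)]
        rw [piLow_down hU hiU, piLow_up h2]
        omega

lemma pr_TrT_down (hU : ∀ k ∈ U, 1 < k ∧ k < n) (hn : 2 ≤ n) {i : ℕ} (hi1 : 1 ≤ i)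
    (hi2 : i ≤ n) (hiU : i ∉ U) : pr n U (TrT n U) i = 1 := by
  unfold pr
  have hupper : ∀ x ∈ (Finset.Icc (i + 1) (n + 1)).filter
      (fun b => TEdge n U (TrT n U) i b), muD n U i x ≤ 1 := by
    intro x hx
    simp only [Finset.mem_filter, Finset.mem_Icc] at hx
    obtain ⟨⟨hx1, hx2⟩, hedge⟩ := hx
    rcases hedge with h|h|h
    · -- (i, x) ∈ TrT : impossible since i is down and positive
      simp only [TrT, Finset.mem_image, Finset.mem_Icc, Prod.mk.injEq] at h
      obtain ⟨j, ⟨hj1, hj2⟩, hA, hB⟩ := h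
      rcases valA_cases U j with ⟨h2, _⟩|⟨h2, _, _, _⟩
      · omega
      · rw [hA] at h2; exact absurd h2 hiU
    · -- (x, i) ∈ TrT : impossible since x > i
      simp only [TrT, Finset.mem_image, Finset.mem_Icc, Prod.mk.injEq] at h
      obtain ⟨j, ⟨hj1, hj2⟩, hA, hB⟩ := h
      obtain ⟨_, hb2, _, _⟩ := valB_spec hU hj1 hj2 hn
      have : valA U j ≤ j := by
        rcases valA_cases U j with ⟨h2, _⟩|⟨_, h2, _, _⟩ <;> omega
      omega
    · exact mu_bnd hU hn hi1 hi2 hx2 (by omega) h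
  rcases eq_or_lt_of_le hi2 with h1|h1
  · -- i = n : witness n+1
    apply sup_eq hupper (a := n + 1)
    · simp only [Finset.mem_filter, Finset.mem_Icc]
      subst h1
      exact ⟨⟨by omega, by omega⟩, Or.inr (Or.inr (bnd_top hU hn))⟩
    · subst h1; exact mu_top hU hn
  · -- i ≤ n - 1 : witness valB i (boundary edge)
    obtain ⟨hb1, hb2, hb3, hb4⟩ := valB_spec hU hi1 (show i ≤ n - 1 by omega) hn
    have hbnd : BndEdge n U i (valB n U i) := by
      unfold BndEdge
      have h2 := lblPos_down hU hiU
      have h3 := posB_eq hU hn hi1 (show i ≤ n - 1 by omega)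
      omega
    apply sup_eq hupper (a := valB n U i)
    · simp only [Finset.mem_filter, Finset.mem_Icc]
      exact ⟨⟨by omega, by omega⟩, Or.inr (Or.inr hbnd)⟩
    · simp only [muD, if_neg (by omega : ¬ valB n U i < i)]
      rw [piHigh_down hU hiU (by omega) (by omega),
        piHigh_down hU hb1 (by omega) (by omega)]
      omega

lemma pl_TrT_up (hU : ∀ k ∈ U, 1 < k ∧ k < n) (hn : 2 ≤ n) {i : ℕ} (hiU : i ∈ U) :
    pl n U (TrT n U) i = 1 := by
  have hi1 : 2 ≤ i := (hU i hiU).1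
  have hi2 : i ≤ n - 1 := by have := (hU i hiU).2; omega
  have hsi : 1 ≤ sUf U i := by
    have := sUf_lt (show (0:ℕ) < i by omega) hiU
    have := sUf_zero hU
    omega
  unfold pl
  have hupper : ∀ x ∈ (Finset.range i).filter
      (fun a => TEdge n U (TrT n U) a i), muD n U i x ≤ 1 := by
    intro x hx
    simp only [Finset.mem_filter, Finset.mem_range] at hx
    obtain ⟨hx1, hedge⟩ := hx
    rcases hedge with h|h|h
    · -- (x, i) ∈ TrT : then i = valB j ∉ U, contradiction
      simp only [TrT, Finset.mem_image, Finset.mem_Icc, Prod.mk.injEq] at h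
      obtain ⟨j, ⟨hj1, hj2⟩, hA, hB⟩ := h
      obtain ⟨hb1, _, _, _⟩ := valB_spec hU hj1 hj2 hn
      rw [hB] at hb1; exact absurd hiU hb1
    · -- (i, x) ∈ TrT : then i = valA j ≤ j < valB j = x, contra x < i
      simp only [TrT, Finset.mem_image, Finset.mem_Icc, Prod.mk.injEq] at h
      obtain ⟨j, ⟨hj1, hj2⟩, hA, hB⟩ := h
      obtain ⟨_, hb2, _, _⟩ := valB_spec hU hj1 hj2 hn
      have : valA U j ≤ j := by
        rcases valA_cases U j with ⟨h2, _⟩|⟨_, h2, _, _⟩ <;> omega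
      omega
    · exact mu_bnd hU hn (by omega) (by omega) (by omega) (by omega) (bnd_symm h)
  rcases eq_or_lt_of_le hsi with h1|h1
  · -- sUf i = 1 : witness 0 (wrap-around boundary edge)
    have hbnd : BndEdge n U 0 i := by
      unfold BndEdge
      have h2 := lblPos_zero hU
      have h3 := lblPos_up hU hn hiU
      omega
    apply sup_eq hupper (a := 0)
    · simp only [Finset.mem_filter, Finset.mem_range]
      exact ⟨by omega, Or.inr (Or.inr hbnd)⟩
    · simp only [muD, if_pos (by omega : 0 < i)]
      rw [piLow_up hiU, piLow_down hU (nmem_of_small hU (by omega))]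
      have h2 := sUf_zero hU
      omega
  · -- sUf i ≥ 2 : witness valA (i-1) (previous up element)
    have hstep := sUf_succ_mem (U := U) hiU (by omega)
    rcases valA_cases U (i-1) with ⟨_, h3⟩|⟨h2, h3, h4, h5⟩
    · omega
    · have hbnd : BndEdge n U (valA U (i-1)) i := by
        unfold BndEdge
        have ha := lblPos_up hU hn h2
        have hb := lblPos_up hU hn hiU
        have hc := sUf_le_card U (i - 1)
        have hq := card_U_le hU hn
        omega
      apply sup_eq hupper (a := valA U (i-1))
      · simp only [Finset.mem_filter, Finset.mem_range]
        exact ⟨by omega, Or.inr (Or.inr hbnd)⟩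
      · simp only [muD, if_pos (by omega : valA U (i-1) < i)]
        rw [piLow_up hiU, piLow_up h2]
        omega

lemma pr_TrT_up (hU : ∀ k ∈ U, 1 < k ∧ k < n) (hn : 2 ≤ n) {i : ℕ} (hiU : i ∈ U) :
    pr n U (TrT n U) i = n + 1 - i := by
  have hi1 : 2 ≤ i := (hU i hiU).1
  have hi2 : i ≤ n - 1 := by have := (hU i hiU).2; omega
  unfold pr
  obtain ⟨hb1, hb2, hb3, hb4⟩ := valB_spec hU (show 1 ≤ i by omega) hi2 hn
  have hmem : (i, valB n U i) ∈ TrT n U := by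
    simp only [TrT, Finset.mem_image, Finset.mem_Icc, Prod.mk.injEq]
    exact ⟨i, ⟨by omega, hi2⟩, valA_self hiU, rfl⟩
  apply sup_eq (a := valB n U i)
  · intro x hx
    simp only [Finset.mem_filter, Finset.mem_Icc] at hx
    exact mu_le_high hU hn (by omega) (by omega) (by omega) hx.1.2
  · simp only [Finset.mem_filter, Finset.mem_Icc]
    exact ⟨⟨by omega, by omega⟩, Or.inl hmem⟩
  · simp only [muD, if_neg (by omega : ¬ valB n U i < i)]
    rw [piHigh_up hU hiU, piHigh_down hU hb1 (by omega) (by omega)]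
    omega

lemma pl_TrT'_down (hU : ∀ k ∈ U, 1 < k ∧ k < n) (hn : 2 ≤ n) {i : ℕ} (hi1 : 1 ≤ i)
    (hi2 : i ≤ n) (hiU : i ∉ U) : pl n U (TrT' n U) i = 1 := by
  unfold pl
  have hupper : ∀ x ∈ (Finset.range i).filter
      (fun a => TEdge n U (TrT' n U) a i), muD n U i x ≤ 1 := by
    intro x hx
    simp only [Finset.mem_filter, Finset.mem_range] at hx
    obtain ⟨hx1, hedge⟩ := hx
    rcases hedge with h|h|h
    · -- (x, i) ∈ TrT' : then i = valB' j, up or n+1, contradiction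
      simp only [TrT', Finset.mem_image, Finset.mem_Icc, Prod.mk.injEq] at h
      obtain ⟨j, ⟨hj1, hj2⟩, hA, hB⟩ := h
      rcases valB'_cases hU (n := n) j with ⟨h2, _⟩|⟨h2, _, _⟩
      · omega
      · rw [hB] at h2; exact absurd h2 hiU
    · -- (i, x) ∈ TrT' : then i = valA' j ≤ j < valB' j = x, contra x < i
      simp only [TrT', Finset.mem_image, Finset.mem_Icc, Prod.mk.injEq] at h
      obtain ⟨j, ⟨hj1, hj2⟩, hA, hB⟩ := h
      obtain ⟨_, _, ha3, _⟩ := valA'_spec hU hj1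
      have : j < valB' n U j := by
        rcases valB'_cases hU (n := n) j with ⟨h2, _⟩|⟨_, h2, _⟩ <;> omega
      omega
    · exact mu_bnd hU hn hi1 hi2 (by omega) (by omega) (bnd_symm h)
  rcases eq_or_lt_of_le hi1 with h1|h1
  · -- i = 1 : witness 0
    subst h1
    apply sup_eq hupper (a := 0)
    · simp only [Finset.mem_filter, Finset.mem_range]
      exact ⟨by omega, Or.inr (Or.inr (bnd_zero_one hU))⟩
    · exact mu_one_zero hU
  · -- i ≥ 2 : witness valA' (i-1)
    obtain ⟨ha1, ha2, ha3, ha4⟩ := valA'_spec hU (show 1 ≤ i - 1 by omega)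
    have hpred := sUf_pred (U := U) hiU
    have hbnd : BndEdge n U (valA' U (i-1)) i := by
      unfold BndEdge
      have h2 := lblPos_down hU hiU
      have h3 := posA'_eq hU (show 1 ≤ i - 1 by omega)
      omega
    apply sup_eq hupper (a := valA' U (i-1))
    · simp only [Finset.mem_filter, Finset.mem_range]
      exact ⟨by omega, Or.inr (Or.inr hbnd)⟩
    · simp only [muD, if_pos (by omega : valA' U (i-1) < i)]
      rw [piLow_down hU hiU, piLow_down hU ha1]
      omega

lemma pr_TrT'_down (hU : ∀ k ∈ U, 1 < k ∧ k < n) (hn : 2 ≤ n) {i : ℕ} (hi1 : 1 ≤ i)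
    (hi2 : i ≤ n) (hiU : i ∉ U) : pr n U (TrT' n U) i = n + 1 - i := by
  unfold pr
  have hupper : ∀ x ∈ (Finset.Icc (i + 1) (n + 1)).filter
      (fun b => TEdge n U (TrT' n U) i b), muD n U i x ≤ n + 1 - i := by
    intro x hx
    simp only [Finset.mem_filter, Finset.mem_Icc] at hx
    exact mu_le_high hU hn hi1 hi2 (by omega) hx.1.2
  rcases eq_or_lt_of_le hi2 with h1|h1
  · -- i = n : witness n+1
    apply sup_eq hupper (a := n + 1)
    · simp only [Finset.mem_filter, Finset.mem_Icc]
      subst h1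
      exact ⟨⟨by omega, by omega⟩, Or.inr (Or.inr (bnd_top hU hn))⟩
    · subst h1
      rw [mu_top hU hn]
      omega
  · -- i ≤ n-1 : witness valB' i via the diagonal (i, valB' i)
    have hmem : (i, valB' n U i) ∈ TrT' n U := by
      simp only [TrT', Finset.mem_image, Finset.mem_Icc, Prod.mk.injEq]
      exact ⟨i, ⟨by omega, by omega⟩, valA'_self hU hiU hi1, rfl⟩
    have hble : valB' n U i ≤ n + 1 := by
      rcases valB'_cases hU (n := n) i with ⟨h2, _⟩|⟨h2, _, _⟩
      · omega
      · have := (hU _ h2).2; omega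
    have hblt : i < valB' n U i := by
      rcases valB'_cases hU (n := n) i with ⟨h2, _⟩|⟨_, h2, _⟩ <;> omega
    apply sup_eq hupper (a := valB' n U i)
    · simp only [Finset.mem_filter, Finset.mem_Icc]
      exact ⟨⟨by omega, hble⟩, Or.inl hmem⟩
    · simp only [muD, if_neg (by omega : ¬ valB' n U i < i)]
      rcases valB'_cases hU (n := n) i with ⟨h2, h3⟩|⟨h2, h3, h4⟩
      · rw [h2]
        rw [piHigh_down hU hiU (by omega) (by omega),
          piHigh_down hU (nmem_of_big hU (show n ≤ n + 1 by omega)) (by omega) (by omega)]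
        have h5 := sUf_card hU (k := n + 1) (by omega)
        omega
      · rw [piHigh_down hU hiU (by omega) (by omega), piHigh_up hU h2]
        have h5 := sUf_le_card U i
        omega

lemma pl_TrT'_up (hU : ∀ k ∈ U, 1 < k ∧ k < n) (hn : 2 ≤ n) {i : ℕ} (hiU : i ∈ U) :
    pl n U (TrT' n U) i = i := by
  have hi1 : 2 ≤ i := (hU i hiU).1
  have hi2 : i ≤ n - 1 := by have := (hU i hiU).2; omega
  unfold pl
  obtain ⟨ha1, ha2, ha3, ha4⟩ := valA'_spec hU (show 1 ≤ i - 1 by omega)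
  have hmem : (valA' U (i-1), i) ∈ TrT' n U := by
    simp only [TrT', Finset.mem_image, Finset.mem_Icc, Prod.mk.injEq]
    exact ⟨i - 1, ⟨by omega, by omega⟩, rfl, valB'_self hiU (by omega)⟩
  have hstep := sUf_succ_mem (U := U) hiU (by omega)
  apply sup_eq (a := valA' U (i-1))
  · intro x hx
    simp only [Finset.mem_filter, Finset.mem_range] at hx
    exact mu_le_low hU (by omega) hx.1
  · simp only [Finset.mem_filter, Finset.mem_range]
    exact ⟨by omega, Or.inl hmem⟩
  · simp only [muD, if_pos (by omega : valA' U (i-1) < i)]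
    rw [piLow_up hiU, piLow_down hU ha1]
    omega

lemma pr_TrT'_up (hU : ∀ k ∈ U, 1 < k ∧ k < n) (hn : 2 ≤ n) {i : ℕ} (hiU : i ∈ U) :
    pr n U (TrT' n U) i = 1 := by
  have hi1 : 2 ≤ i := (hU i hiU).1
  have hi2 : i ≤ n - 1 := by have := (hU i hiU).2; omega
  unfold pr
  have hupper : ∀ x ∈ (Finset.Icc (i + 1) (n + 1)).filter
      (fun b => TEdge n U (TrT' n U) i b), muD n U i x ≤ 1 := by
    intro x hx
    simp only [Finset.mem_filter, Finset.mem_Icc] at hx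
    obtain ⟨⟨hx1, hx2⟩, hedge⟩ := hx
    rcases hedge with h|h|h
    · -- (i, x) ∈ TrT' : then i = valA' j ∉ U, contradiction
      simp only [TrT', Finset.mem_image, Finset.mem_Icc, Prod.mk.injEq] at h
      obtain ⟨j, ⟨hj1, hj2⟩, hA, hB⟩ := h
      obtain ⟨ha1', _, _, _⟩ := valA'_spec hU hj1
      rw [hA] at ha1'; exact absurd hiU ha1'
    · -- (x, i) ∈ TrT' : then x = valA' j ≤ j < valB' j = i, contra x > i
      simp only [TrT', Finset.mem_image, Finset.mem_Icc, Prod.mk.injEq] at h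
      obtain ⟨j, ⟨hj1, hj2⟩, hA, hB⟩ := h
      obtain ⟨_, _, ha3', _⟩ := valA'_spec hU hj1
      have : j < valB' n U j := by
        rcases valB'_cases hU (n := n) j with ⟨h2, _⟩|⟨_, h2, _⟩ <;> omega
      omega
    · exact mu_bnd hU hn (by omega) (by omega) hx2 (by omega) h
  have hble : valB' n U i ≤ n + 1 := by
    rcases valB'_cases hU (n := n) i with ⟨h2, _⟩|⟨h2, _, _⟩
    · omega
    · have := (hU _ h2).2; omega
  have hblt : i < valB' n U i := by
    rcases valB'_cases hU (n := n) i with ⟨h2, _⟩|⟨_, h2, _⟩ <;> omega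
  have hbnd : BndEdge n U i (valB' n U i) := by
    unfold BndEdge
    have h2 := lblPos_up hU hn hiU
    have h3 := posB'_eq hU hn i
    omega
  apply sup_eq hupper (a := valB' n U i)
  · simp only [Finset.mem_filter, Finset.mem_Icc]
    exact ⟨⟨by omega, hble⟩, Or.inr (Or.inr hbnd)⟩
  · simp only [muD, if_neg (by omega : ¬ valB' n U i < i)]
    rcases valB'_cases hU (n := n) i with ⟨h2, h3⟩|⟨h2, h3, h4⟩
    · rw [h2]
      rw [piHigh_up hU hiU,
        piHigh_down hU (nmem_of_big hU (show n ≤ n + 1 by omega)) (by omega) (by omega)]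
      have h5 := sUf_card hU (k := n + 1) (by omega)
      omega
    · rw [piHigh_up hU hiU, piHigh_up hU h2]
      omega

end Weights

/-- For any orientation of `A_{n-1}` (with up set `U ⊆ {2,…,n−1}`) there are
triangulations `T` and `T'` of the labelled `(n+2)`-gon with
`M_𝒜(T) = (1, 2, …, n)` and `M_𝒜(T') = (n, n−1, …, 1)`. -/
theorem exists_identity_and_reversed_vertex (n : ℕ) (hn : 2 ≤ n) (U : Finset ℕ)
    (hU : ∀ k ∈ U, 1 < k ∧ k < n) :
    ∃ T T' : Finset (ℕ × ℕ), IsTriang n U T ∧ IsTriang n U T' ∧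
      (∀ i : ℕ, 1 ≤ i → i ≤ n → Mcoord n U T i = (i : ℤ)) ∧
      (∀ i : ℕ, 1 ≤ i → i ≤ n → Mcoord n U T' i = (n : ℤ) + 1 - (i : ℤ)) := by
  refine ⟨TrT n U, TrT' n U, isTriang_TrT hU hn, isTriang_TrT' hU hn, ?_, ?_⟩
  · intro i hi1 hi2
    unfold Mcoord weightW
    by_cases hiU : i ∈ U
    · rw [if_pos hiU, pl_TrT_up hU hn hiU, pr_TrT_up hU hn hiU]
      have := (hU i hiU).2
      push_cast
      omega
    · rw [if_neg hiU, pl_TrT_down hU hn hi1 hi2 hiU, pr_TrT_down hU hn hi1 hi2 hiU]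
      push_cast
      omega
  · intro i hi1 hi2
    unfold Mcoord weightW
    by_cases hiU : i ∈ U
    · rw [if_pos hiU, pl_TrT'_up hU hn hiU, pr_TrT'_up hU hn hiU]
      push_cast
      omega
    · rw [if_neg hiU, pl_TrT'_down hU hn hi1 hi2 hiU, pr_TrT'_down hU hn hi1 hi2 hiU]
      push_cast
      omega
end

section
/- Let T be a centrally symmetric triangulation of a regular (2n+2)-gon labelled according to a symmetric orientation 𝒜 of A_{2n-1}. Then the weights satisfy ω_i = ω_{2n+1−i} for all i ∈ {2,...,2n−1}, and consequently the coordinates of M_𝒜(T) = (x_1,...,x_{2n}) satisfy x_i + x_{2n+1−i} = 2n+1 for all i ∈ {2,...,2n−1}. -/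
open Finset

attribute [local instance] Classical.propDecidable

/-- The central point reflection of the regular `(2n+2)`-gon, expressed on labels: it
exchanges label `i` with `2n+1−i` for `i ∈ [2n] ∖ {1, 2n}`, exchanges `1` with `2n+1`,
and exchanges `0` with `2n`. -/
def centSym (n : ℕ) (k : ℕ) : ℕ :=
  if k = 0 then 2 * n
  else if k = 2 * n then 0
  else if k = 1 then 2 * n + 1
  else if k = 2 * n + 1 then 1
  else 2 * n + 1 - k

/-
Central symmetry is the half-turn of the `(2n+2)`-gon: it moves every vertex by `n + 1`
positions.  Because the orientation is symmetric, on labels it is `centSym`, i.e. essentially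
`i ↦ 2n+1-i`, which reverses the order of the labels `2, …, 2n-1`.  It therefore carries the
boundary path through the labels `≤ i` isometrically onto the boundary path through the labels
`≥ 2n+1-i`, and edges of `T` to edges of `T`.  Hence `p_ℓ(2n+1-i) = p_r(i)` and
`p_r(2n+1-i) = p_ℓ(i)`, so `ω_i = ω_{2n+1-i}`; since exactly one of `i`, `2n+1-i` is up, the
coordinates add up to `2n+1`.  All the position identities come from one count: `m ↦ 2n+1-m`
exchanges the up and the down labels in `{2, …, 2n-1}`, so in particular `|U| = n - 1`.
-/

section FilterCard

variable {U : Finset ℕ}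

lemma card_filter_notMem_Icc_add_card {a b : ℕ} (hU : ∀ m ∈ U, a ≤ m ∧ m ≤ b) :
    #((Icc a b).filter (· ∉ U)) + #U = b + 1 - a := by
  have hsub : U ⊆ Icc a b := fun m hm => mem_Icc.mpr (hU m hm)
  rw [filter_not, filter_mem_eq_inter, inter_eq_right.mpr hsub, card_sdiff_of_subset hsub,
    Nat.card_Icc, Nat.sub_add_cancel (by simpa using card_le_card hsub)]

lemma card_filter_notMem_Icc_eq_add_one_left {a a' b : ℕ} (ha' : a + 1 = a') (hab : a ≤ b)
    (ha : a ∉ U) : #((Icc a b).filter (· ∉ U)) = #((Icc a' b).filter (· ∉ U)) + 1 := by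
  rw [Icc_eq_cons_Ioc hab, filter_cons_of_pos (p := (· ∉ U)) _ _ _ ha, card_cons, ← ha',
    Icc_add_one_left_eq_Ioc]

lemma card_filter_notMem_Icc_eq_add_one_right {a b b' : ℕ} (hb' : b + 1 = b') (hab : a ≤ b')
    (hb : b' ∉ U) : #((Icc a b').filter (· ∉ U)) = #((Icc a b).filter (· ∉ U)) + 1 := by
  subst hb'
  rw [Icc_eq_cons_Ico hab, filter_cons_of_pos (p := (· ∉ U)) _ _ _ hb, card_cons,
    Ico_add_one_right_eq_Icc]

lemma filter_eq_filter_mem_Icc {p : ℕ → Prop} [DecidablePred p] {a b : ℕ}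
    (hp : ∀ m ∈ U, p m ↔ a ≤ m ∧ m ≤ b) : U.filter p = (Icc a b).filter (· ∈ U) := by
  ext m
  simp only [mem_filter, mem_Icc]
  exact ⟨fun ⟨hm, h⟩ => ⟨(hp m hm).mp h, hm⟩, fun ⟨h, hm⟩ => ⟨hm, (hp m hm).mpr h⟩⟩

lemma lblPos_of_notMem {N k : ℕ} (hk : k ∉ U) :
    lblPos N U k = #((Icc 1 k).filter (· ∉ U)) :=
  if_neg hk

lemma lblPos_of_mem {N k : ℕ} (hk : k ∈ U) :
    lblPos N U k = N + 1 - #U + #(U.filter (k ≤ ·)) :=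
  if_pos hk

end FilterCard

section CentSym

variable {n : ℕ}

lemma centSym_centSym {k : ℕ} (hk : k ≤ 2 * n + 1) : centSym n (centSym n k) = k := by
  unfold centSym; split_ifs <;> first | omega | contradiction

lemma centSym_le {k : ℕ} (hk : k ≤ 2 * n + 1) : centSym n k ≤ 2 * n + 1 := by
  unfold centSym; split_ifs <;> omega

lemma centSym_eq_sub {k : ℕ} (h2 : 2 ≤ k) (hk : k ≤ 2 * n - 1) :
    centSym n k = 2 * n + 1 - k := by
  unfold centSym; split_ifs <;> omega

lemma centSym_of_lt_two {k : ℕ} (hk : k < 2) : centSym n k = 2 * n + k := by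
  unfold centSym; split_ifs <;> omega

lemma centSym_le_one {k : ℕ} (hk : 2 * n ≤ k) (hk' : k ≤ 2 * n + 1) : centSym n k ≤ 1 := by
  unfold centSym; split_ifs <;> omega

lemma centSym_lt_centSym_of_lt {i j : ℕ} (h2 : 2 ≤ i) (hi : i ≤ 2 * n - 1) (hji : j < i) :
    centSym n i < centSym n j := by
  unfold centSym; split_ifs <;> omega

lemma centSym_lt_centSym_of_gt {i j : ℕ} (h2 : 2 ≤ i) (hi : i ≤ 2 * n - 1) (hij : i < j)
    (hj : j ≤ 2 * n + 1) : centSym n j < centSym n i := by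
  unfold centSym; split_ifs <;> omega

end CentSym

structure IsSymmOrientation (n : ℕ) (U : Finset ℕ) : Prop where
  bounds : ∀ k ∈ U, 1 < k ∧ k < 2 * n
  notMem_iff : ∀ i : ℕ, 1 < i → i < 2 * n → (i ∉ U ↔ 2 * n + 1 - i ∈ U)

lemma tEdge_comm {N : ℕ} {U : Finset ℕ} {T : Finset (ℕ × ℕ)} {a b : ℕ}
    (h : TEdge N U T a b) : TEdge N U T b a := by
  unfold TEdge BndEdge at h ⊢
  tauto

def IsCentSymm (n : ℕ) (T : Finset (ℕ × ℕ)) : Prop :=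
  ∀ a b : ℕ, (a, b) ∈ T →
    (min (centSym n a) (centSym n b), max (centSym n a) (centSym n b)) ∈ T

lemma IsCentSymm.mem_or_swap_mem {n : ℕ} {T : Finset (ℕ × ℕ)} (hT : IsCentSymm n T) {a b : ℕ}
    (h : (a, b) ∈ T) : (centSym n a, centSym n b) ∈ T ∨ (centSym n b, centSym n a) ∈ T := by
  have h' := hT a b h
  rcases le_total (centSym n a) (centSym n b) with hle | hle
  · rw [min_eq_left hle, max_eq_right hle] at h'
    exact .inl h'
  · rw [min_eq_right hle, max_eq_left hle] at h'
    exact .inr h'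

namespace IsSymmOrientation

variable {n : ℕ} {U : Finset ℕ} {T : Finset (ℕ × ℕ)}

lemma reflect_notMem (hA : IsSymmOrientation n U) {m : ℕ} (hm : m ∈ U) :
    2 * n + 1 - m ∉ U := by
  have hb := hA.bounds m hm
  have h := hA.notMem_iff (2 * n + 1 - m) (by omega) (by omega)
  rw [Nat.sub_sub_self (by omega)] at h
  exact h.mpr hm

lemma reflect_mem (hA : IsSymmOrientation n U) {m : ℕ} (h1 : 1 < m) (h2 : m < 2 * n)
    (hm : m ∉ U) : 2 * n + 1 - m ∈ U :=
  (hA.notMem_iff m h1 h2).mp hm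

lemma card_filter_mem_Icc_eq_reflect (hA : IsSymmOrientation n U) {a b a' b' : ℕ}
    (ha : 2 ≤ a) (hb : b ≤ 2 * n - 1) (haa' : a + b' = 2 * n + 1) (hbb' : b + a' = 2 * n + 1) :
    #((Icc a b).filter (· ∈ U)) = #((Icc a' b').filter (· ∉ U)) := by
  refine card_nbij' (2 * n + 1 - ·) (2 * n + 1 - ·) ?_ ?_ ?_ ?_ <;>
    simp only [coe_filter, Set.MapsTo, Set.LeftInvOn, Set.mem_ofPred_eq, mem_Icc]
  · rintro m ⟨hm, hmU⟩
    exact ⟨by omega, hA.reflect_notMem hmU⟩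
  · rintro m ⟨hm, hmU⟩
    exact ⟨by omega, hA.reflect_mem (by omega) (by omega) hmU⟩
  · intro m hm; omega
  · intro m hm; omega

lemma card_eq (hA : IsSymmOrientation n U) : #U = n - 1 := by
  have hsum := card_filter_notMem_Icc_add_card (a := 2) (b := 2 * n - 1) fun m hm => by
    have := hA.bounds m hm; omega
  rcases Nat.eq_zero_or_pos n with rfl | hn
  · omega
  have hfilter := filter_eq_filter_mem_Icc (p := fun _ => True) (a := 2) (b := 2 * n - 1)
    fun m hm => by have := hA.bounds m hm; simp only [true_iff]; omega
  rw [filter_true] at hfilter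
  have hrefl := hA.card_filter_mem_Icc_eq_reflect (a' := 2) (b' := 2 * n - 1) le_rfl le_rfl
    (by omega) (by omega)
  rw [← hfilter] at hrefl
  omega

lemma one_notMem (hA : IsSymmOrientation n U) : 1 ∉ U :=
  fun h => by have := hA.bounds 1 h; omega

lemma two_mul_notMem (hA : IsSymmOrientation n U) : 2 * n ∉ U :=
  fun h => by have := hA.bounds _ h; omega

lemma card_filter_notMem_Icc_one_add (hA : IsSymmOrientation n U) {M : ℕ}
    (hM : 2 * n - 1 ≤ M) :
    #((Icc 1 M).filter (· ∉ U)) + (n - 1) = M := by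
  rw [← hA.card_eq, card_filter_notMem_Icc_add_card fun m hm => by
    have := hA.bounds m hm; omega]
  omega

lemma card_filter_ge_add_one (hA : IsSymmOrientation n U) {k : ℕ} (hk1 : 1 ≤ k)
    (hk : k ≤ 2 * n - 1) :
    #(U.filter (2 * n + 1 - k ≤ ·)) + 1 = #((Icc 1 k).filter (· ∉ U)) := by
  rw [filter_eq_filter_mem_Icc (a := 2 * n + 1 - k) (b := 2 * n - 1) fun m hm => by
      have := hA.bounds m hm; omega,
    hA.card_filter_mem_Icc_eq_reflect (a' := 2) (b' := k) (by omega) le_rfl (by omega)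
      (by omega),
    card_filter_notMem_Icc_eq_add_one_left rfl hk1 hA.one_notMem]

lemma card_filter_le_add_one (hA : IsSymmOrientation n U) {k : ℕ} (hk1 : 1 ≤ k)
    (hk : k ≤ 2 * n - 1) :
    #(U.filter (· ≤ k)) + 1 = #((Icc (2 * n + 1 - k) (2 * n)).filter (· ∉ U)) := by
  rw [filter_eq_filter_mem_Icc (a := 2) (b := k) fun m hm => by
      have := hA.bounds m hm; omega,
    hA.card_filter_mem_Icc_eq_reflect (a' := 2 * n + 1 - k) (b' := 2 * n - 1) le_rfl hk
      (by omega) (by omega),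
    card_filter_notMem_Icc_eq_add_one_right (b := 2 * n - 1) (by omega) (by omega)
      hA.two_mul_notMem]

lemma lblPos_le_of_notMem (hA : IsSymmOrientation n U) {k : ℕ} (hk : k ≤ 2 * n - 1)
    (hkU : k ∉ U) : lblPos (2 * n) U k ≤ n := by
  have hmono : #((Icc 1 k).filter (· ∉ U)) ≤ #((Icc 1 (2 * n - 1)).filter (· ∉ U)) :=
    card_le_card (filter_subset_filter _ (Icc_subset_Icc_right hk))
  have := hA.card_filter_notMem_Icc_one_add le_rfl
  rw [lblPos_of_notMem hkU]
  omega

lemma lblPos_centSym_of_notMem (hA : IsSymmOrientation n U) (hn : 1 ≤ n) {k : ℕ}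
    (hk : k ≤ 2 * n - 1) (hkU : k ∉ U) :
    lblPos (2 * n) U (centSym n k) = lblPos (2 * n) U k + (n + 1) := by
  rw [lblPos_of_notMem hkU]
  rcases Nat.lt_or_ge k 2 with hk2 | hk2
  · have hσ : centSym n k = 2 * n + k := centSym_of_lt_two hk2
    have hσU : centSym n k ∉ U := fun h => by have := hA.bounds _ h; omega
    have := hA.card_filter_notMem_Icc_one_add (M := 2 * n + k) (by omega)
    have hlow : #((Icc 1 k).filter (· ∉ U)) = k := by
      interval_cases k
      · simp
      · rw [Icc_self, filter_singleton, if_pos hkU, card_singleton]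
    rw [lblPos_of_notMem hσU, hσ, hlow]
    omega
  · have hσU : centSym n k ∈ U := by
      rw [centSym_eq_sub hk2 hk]; exact hA.reflect_mem (by omega) (by omega) hkU
    rw [lblPos_of_mem hσU, centSym_eq_sub hk2 hk, hA.card_eq,
      ← hA.card_filter_ge_add_one (by omega) hk]
    omega

lemma lblPos_centSym (hA : IsSymmOrientation n U) (hn : 1 ≤ n) {k : ℕ}
    (hk : k ≤ 2 * n + 1) :
    (lblPos (2 * n) U k ≤ n ∧
      lblPos (2 * n) U (centSym n k) = lblPos (2 * n) U k + (n + 1)) ∨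
    (lblPos (2 * n) U (centSym n k) ≤ n ∧
      lblPos (2 * n) U k = lblPos (2 * n) U (centSym n k) + (n + 1)) := by
  have of_low : ∀ j, j ≤ 2 * n - 1 → j ∉ U → lblPos (2 * n) U j ≤ n ∧
      lblPos (2 * n) U (centSym n j) = lblPos (2 * n) U j + (n + 1) :=
    fun j hj hjU => ⟨hA.lblPos_le_of_notMem hj hjU, hA.lblPos_centSym_of_notMem hn hj hjU⟩
  by_cases hlow : k ≤ 2 * n - 1 ∧ k ∉ U
  · exact .inl (of_low k hlow.1 hlow.2)
  · have hσlow : centSym n k ≤ 2 * n - 1 ∧ centSym n k ∉ U := by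
      rcases not_and_or.mp hlow with hk' | hkU
      · have := centSym_le_one (n := n) (by omega) hk
        exact ⟨by omega, fun h => by have := hA.bounds _ h; omega⟩
      · rw [not_not] at hkU
        have := hA.bounds k hkU
        rw [centSym_eq_sub (by omega) (by omega)]
        exact ⟨by omega, hA.reflect_notMem hkU⟩
    have h := of_low _ hσlow.1 hσlow.2
    rw [centSym_centSym hk] at h
    exact .inr h

lemma bndEdge_centSym (hA : IsSymmOrientation n U) (hn : 1 ≤ n) {a b : ℕ}
    (ha : a ≤ 2 * n + 1) (hb : b ≤ 2 * n + 1) (h : BndEdge (2 * n) U a b) :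
    BndEdge (2 * n) U (centSym n a) (centSym n b) := by
  have := hA.lblPos_centSym hn ha
  have := hA.lblPos_centSym hn hb
  unfold BndEdge at h ⊢
  omega

lemma piHigh_centSym (hA : IsSymmOrientation n U) {k : ℕ} (hk : k ≤ 2 * n - 1) :
    piHigh (2 * n) U (centSym n k) = 1 - piLow (2 * n) U k := by
  rw [piHigh, piLow]
  by_cases hkU : k ∈ U
  · have := hA.bounds k hkU
    have hσU := hA.reflect_notMem hkU
    rw [centSym_eq_sub (by omega) hk, if_neg hσU, if_pos hkU,
      ← hA.card_filter_le_add_one (by omega) hk]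
    omega
  rcases Nat.lt_or_ge k 2 with hk2 | hk2
  · have h2nU : 2 * n ∉ U := hA.two_mul_notMem
    interval_cases k
    · have hσ : centSym n 0 = 2 * n := centSym_of_lt_two (by omega)
      rw [hσ, if_neg h2nU, if_neg hkU, Icc_self, filter_singleton, if_pos h2nU]
      simp
    · have hσ : centSym n 1 = 2 * n + 1 := centSym_of_lt_two (by omega)
      have h2n1U : 2 * n + 1 ∉ U := fun h => by have := hA.bounds _ h; omega
      rw [hσ, if_neg h2n1U, if_neg hkU, Icc_self, filter_singleton, if_pos hkU,
        Icc_eq_empty (by omega)]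
      simp
  · have hσU : centSym n k ∈ U := by
      rw [centSym_eq_sub hk2 hk]; exact hA.reflect_mem (by omega) (by omega) hkU
    rw [if_pos hσU, if_neg hkU, centSym_eq_sub hk2 hk,
      ← hA.card_filter_ge_add_one (by omega) hk]
    omega

lemma muD_centSym_of_lt (hA : IsSymmOrientation n U) {i j : ℕ} (hi2 : 2 ≤ i)
    (hi : i ≤ 2 * n - 1) (hji : j < i) :
    muD (2 * n) U (centSym n i) (centSym n j) = muD (2 * n) U i j := by
  have hσ := centSym_lt_centSym_of_lt hi2 hi hji
  rw [muD, muD, if_neg hσ.not_gt, if_pos hji, hA.piHigh_centSym hi,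
    hA.piHigh_centSym (by omega)]
  omega

lemma muD_centSym_of_gt (hA : IsSymmOrientation n U) {i j : ℕ} (hi2 : 2 ≤ i)
    (hi : i ≤ 2 * n - 1) (hij : i < j) (hj : j ≤ 2 * n + 1) :
    muD (2 * n) U (centSym n i) (centSym n j) = muD (2 * n) U i j := by
  have h := hA.muD_centSym_of_lt (i := centSym n i) (j := centSym n j)
    (by rw [centSym_eq_sub hi2 hi]; omega) (by rw [centSym_eq_sub hi2 hi]; omega)
    (centSym_lt_centSym_of_gt hi2 hi hij hj)
  rw [centSym_centSym (by omega), centSym_centSym hj] at h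
  exact h.symm

lemma tEdge_centSym (hA : IsSymmOrientation n U) (hn : 1 ≤ n) (hT : IsCentSymm n T) {a b : ℕ}
    (ha : a ≤ 2 * n + 1) (hb : b ≤ 2 * n + 1) (h : TEdge (2 * n) U T a b) :
    TEdge (2 * n) U T (centSym n a) (centSym n b) := by
  rcases h with h | h | h
  · exact (hT.mem_or_swap_mem h).imp_right .inl
  · exact (hT.mem_or_swap_mem h).symm.imp_right .inl
  · exact .inr (.inr (hA.bndEdge_centSym hn ha hb h))

lemma pl_centSym (hA : IsSymmOrientation n U) (hT : IsCentSymm n T) {i : ℕ} (hi2 : 2 ≤ i)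
    (hi : i ≤ 2 * n - 1) : pl (2 * n) U T (centSym n i) = pr (2 * n) U T i := by
  have hn : 1 ≤ n := by omega
  have hσi := centSym_eq_sub hi2 hi
  have hset : (range (centSym n i)).filter (TEdge (2 * n) U T · (centSym n i)) =
      ((Icc (i + 1) (2 * n + 1)).filter (TEdge (2 * n) U T i ·)).image (centSym n) := by
    ext a
    simp only [mem_image, mem_filter, mem_range, mem_Icc]
    constructor
    · rintro ⟨ha, hE⟩
      have ha' : a ≤ 2 * n + 1 := by omega
      have hlt := centSym_lt_centSym_of_lt (n := n) (by omega) (by omega) ha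
      have hE' := hA.tEdge_centSym hn hT ha' (by omega) hE
      rw [centSym_centSym (by omega)] at hlt hE'
      exact ⟨centSym n a, ⟨⟨hlt, centSym_le ha'⟩, tEdge_comm hE'⟩, centSym_centSym ha'⟩
    · rintro ⟨b, ⟨⟨hb1, hb2⟩, hE⟩, rfl⟩
      exact ⟨centSym_lt_centSym_of_gt hi2 hi hb1 hb2,
        tEdge_comm (hA.tEdge_centSym hn hT (by omega) hb2 hE)⟩
  rw [pl, pr, hset, sup_image]
  refine sup_congr rfl fun b hb => ?_
  rw [mem_filter, mem_Icc] at hb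
  exact hA.muD_centSym_of_gt hi2 hi (by omega) hb.1.2

lemma pr_centSym (hA : IsSymmOrientation n U) (hT : IsCentSymm n T) {i : ℕ} (hi2 : 2 ≤ i)
    (hi : i ≤ 2 * n - 1) : pr (2 * n) U T (centSym n i) = pl (2 * n) U T i := by
  have h := hA.pl_centSym hT (i := centSym n i) (by rw [centSym_eq_sub hi2 hi]; omega)
    (by rw [centSym_eq_sub hi2 hi]; omega)
  rw [centSym_centSym (by omega)] at h
  exact h.symm

lemma weightW_centSym (hA : IsSymmOrientation n U) (hT : IsCentSymm n T) {i : ℕ}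
    (hi2 : 2 ≤ i) (hi : i ≤ 2 * n - 1) :
    weightW (2 * n) U T (centSym n i) = weightW (2 * n) U T i := by
  rw [weightW, weightW, hA.pl_centSym hT hi2 hi, hA.pr_centSym hT hi2 hi, mul_comm]

end IsSymmOrientation

theorem centrally_symmetric_weights_general (n : ℕ) (U : Finset ℕ)
    (hU : ∀ k ∈ U, 1 < k ∧ k < 2 * n)
    (hsym : ∀ i : ℕ, 1 < i → i < 2 * n → (i ∉ U ↔ 2 * n + 1 - i ∈ U))
    (T : Finset (ℕ × ℕ))
    (hcs : ∀ a b : ℕ, (a, b) ∈ T →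
      (min (centSym n a) (centSym n b), max (centSym n a) (centSym n b)) ∈ T) :
    ∀ i : ℕ, 2 ≤ i → i ≤ 2 * n - 1 →
      weightW (2 * n) U T i = weightW (2 * n) U T (2 * n + 1 - i) ∧
      Mcoord (2 * n) U T i + Mcoord (2 * n) U T (2 * n + 1 - i) = 2 * (n : ℤ) + 1 := by
  intro i hi2 hi
  have hA : IsSymmOrientation n U := ⟨hU, hsym⟩
  have hw : weightW (2 * n) U T i = weightW (2 * n) U T (2 * n + 1 - i) := by
    rw [← centSym_eq_sub hi2 hi, hA.weightW_centSym hcs hi2 hi]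
  refine ⟨hw, ?_⟩
  unfold Mcoord
  by_cases hiU : i ∈ U
  · rw [if_pos hiU, if_neg (hA.reflect_notMem hiU), ← hw]
    push_cast
    ring
  · rw [if_neg hiU, if_pos (hA.reflect_mem (by omega) (by omega) hiU), ← hw]
    push_cast
    ring

/-- Let `𝒜` be a symmetric orientation of `A_{2n-1}` (so `i` is down iff `2n+1−i` is up
for `i ∈ [2n] ∖ {1, 2n}`) and let `T` be a centrally symmetric triangulation of the
labelled regular `(2n+2)`-gon.  Then the weights satisfy `ω_i = ω_{2n+1−i}` for all
`i ∈ {2, …, 2n−1}`, and consequently the coordinates of `M_𝒜(T)` satisfy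
`x_i + x_{2n+1−i} = 2n+1` for all `i ∈ {2, …, 2n−1}`. -/
theorem centrally_symmetric_weights (n : ℕ) (hn : 1 ≤ n) (U : Finset ℕ)
    (hU : ∀ k ∈ U, 1 < k ∧ k < 2 * n)
    (hsym : ∀ i : ℕ, 1 < i → i < 2 * n → (i ∉ U ↔ 2 * n + 1 - i ∈ U))
    (T : Finset (ℕ × ℕ)) (hT : IsTriang (2 * n) U T)
    (hcs : ∀ a b : ℕ, (a, b) ∈ T →
      (min (centSym n a) (centSym n b), max (centSym n a) (centSym n b)) ∈ T) :
    ∀ i : ℕ, 2 ≤ i → i ≤ 2 * n - 1 →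
      weightW (2 * n) U T i = weightW (2 * n) U T (2 * n + 1 - i) ∧
      Mcoord (2 * n) U T i + Mcoord (2 * n) U T (2 * n + 1 - i) = 2 * (n : ℤ) + 1 :=
  centrally_symmetric_weights_general n U hU hsym T hcs
end
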